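/- arXiv:1212.1952 — 7 statements merged into one kernel-verified Lean document; each statement's English description precedes it below -/
import Mathlib

section
/- Let τ : (ℕ≥1 → ℂ) → ℂ be a nowhere-vanishing function. Then τ satisfies the three-term equation (for all x and all α₁, α₂, α₃, α₄ ∈ ℂ) if and only if for every integer m ≥ 2, every x : ℕ≥1 → ℂ, all pairwise distinct α₁, …, α_{m+1} ∈ ℂ and all pairwise distinct β₁, …, β_{m−1} ∈ ℂ with βᵢ ≠ αⱼ for all i, j, the addition formula of order m holds at x. (This is the algebraic content of Theorem 1: the family of addition formulae is equivalent to the KP hierarchy, so the three-term equation is equivalent to the KP hierarchy.) -/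
open scoped BigOperators

noncomputable section

/-- Sequences `x = (x₁, x₂, …)` indexed by positive integers, with complex entries. -/
abbrev TSeq : Type := {n : ℕ // 0 < n} → ℂ

/-- `[α]`, the sequence whose `n`-th entry is `αⁿ/n`. -/
noncomputable def ch (α : ℂ) : TSeq := fun n => α ^ (n : ℕ) / ((n : ℕ) : ℂ)

/-- The Vandermonde-type product `Δ(γ₁, …, γₙ) = ∏_{i<j} (γᵢ - γⱼ)`. -/
noncomputable def Vand {n : ℕ} (γ : Fin n → ℂ) : ℂ :=
  ∏ i, ∏ j ∈ Finset.Ioi i, (γ i - γ j)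

/-- `ζ(x; γ₁, …, γₙ) = Δ(γ₁, …, γₙ) · τ(x + [γ₁] + ⋯ + [γₙ])`. -/
noncomputable def zeta (τ : TSeq → ℂ) (x : TSeq) {n : ℕ} (γ : Fin n → ℂ) : ℂ :=
  Vand γ * τ (x + ∑ i, ch (γ i))

/-- The three-term equation of the KP hierarchy. -/
def ThreeTerm (τ : TSeq → ℂ) : Prop :=
  ∀ (x : TSeq) (α₁ α₂ α₃ α₄ : ℂ),
    (α₁ - α₂) * (α₃ - α₄) * τ (x + ch α₁ + ch α₂) * τ (x + ch α₃ + ch α₄)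
    - (α₁ - α₃) * (α₂ - α₄) * τ (x + ch α₁ + ch α₃) * τ (x + ch α₂ + ch α₄)
    + (α₁ - α₄) * (α₂ - α₃) * τ (x + ch α₁ + ch α₄) * τ (x + ch α₂ + ch α₃) = 0

/-- The addition formula of order `m` of the KP hierarchy, with parameters
`α₁, …, α_{m+1}` and `β₁, …, β_{m-1}`, at the point `x`:
`∑_{i=1}^{m+1} (−1)^{i−1} ζ(x; β₁,…,β_{m−1},αᵢ) ζ(x; α₁,…,α̂ᵢ,…,α_{m+1}) = 0`. -/
def KPAdd (τ : TSeq → ℂ) (m : ℕ) (x : TSeq) (α : Fin (m+1) → ℂ) (β : Fin (m-1) → ℂ) : Prop :=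
  ∑ i : Fin (m+1), (-1 : ℂ) ^ (i : ℕ) * zeta τ x (Fin.snoc β (α i)) *
    zeta τ x (fun j : Fin m => α (i.succAbove j)) = 0

/-!
Fix `x` and write `ζ γ = zeta τ x γ` for `γ : Fin (n + 2) → ℂ`. It is alternating in `γ`, and
the three-term equation makes it satisfy the short (three-term) Plücker relations. Take the
reference tuple `R = (0, 1, …, n + 1)`, the pivot `N = ζ R ≠ 0`, and the vectors
`v a = (ζ (R with Rⱼ replaced by a) / N)ⱼ`. Then `γ ↦ N * det (v (γ i))ᵢⱼ` is alternating,
satisfies the same relations and agrees with `ζ` on tuples differing from `R` in at most one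
place. An induction on the number of places where `γ` differs from `R`, using at each step one
three-term relation whose pivot is nonzero, shows that the two functions agree everywhere. Hence
`ζ` is a determinant of vectors and the addition formula of order `n + 2` becomes the Laplace
expansion identity `∑ᵢ (-1)ⁱ det (B, Vᵢ) det (V without Vᵢ) = 0`. Conversely, the addition formula
of order 2 is the three-term equation itself, which holds trivially when two of the `αᵢ`
coincide.
-/

open Function Equiv

section Alternating

variable {α K : Type*} [CommRing K]

structure IsAlternating {n : ℕ} (H : (Fin n → α) → K) : Prop where
  comp_perm : ∀ γ (σ : Perm (Fin n)), H (γ ∘ σ) = (Perm.sign σ : ℤ) * H γ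
  eq_zero_of_not_injective : ∀ γ, ¬ Injective γ → H γ = 0

def ShortPlucker {n : ℕ} (H : (Fin (n + 2) → α) → K) : Prop :=
  ∀ (δ : Fin n → α) (s t c d : α),
    H (Fin.cons s (Fin.cons t δ)) * H (Fin.cons c (Fin.cons d δ))
      - H (Fin.cons s (Fin.cons c δ)) * H (Fin.cons t (Fin.cons d δ))
      + H (Fin.cons s (Fin.cons d δ)) * H (Fin.cons t (Fin.cons c δ)) = 0

namespace IsAlternating

variable {n : ℕ} {H : (Fin n → α) → K}

theorem apply_eq_sign_mul (hH : IsAlternating H) (γ : Fin n → α) (σ : Perm (Fin n)) :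
    H γ = (Perm.sign σ : ℤ) * H (γ ∘ σ) := by
  rw [hH.comp_perm, ← mul_assoc, ← Int.cast_mul, ← Units.val_mul, Int.units_mul_self,
    Units.val_one, Int.cast_one, one_mul]

theorem const_mul (hH : IsAlternating H) (c : K) : IsAlternating fun γ => c * H γ where
  comp_perm γ σ := by rw [hH.comp_perm]; ring
  eq_zero_of_not_injective _ hγ := by rw [hH.eq_zero_of_not_injective _ hγ, mul_zero]

theorem comp {β : Type*} (hH : IsAlternating H) (v : β → α) :
    IsAlternating fun γ : Fin n → β => H (v ∘ γ) where
  comp_perm γ σ := hH.comp_perm (v ∘ γ) σ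
  eq_zero_of_not_injective _ hγ := hH.eq_zero_of_not_injective _ fun h => hγ h.of_comp

end IsAlternating

theorem Fin.exists_perm_apply_zero_apply_one {n : ℕ} {i j : Fin (n + 2)} (hij : i ≠ j) :
    ∃ σ : Perm (Fin (n + 2)), σ 0 = i ∧ σ 1 = j := by
  have hj : swap 0 i j ≠ 0 := by
    rw [Ne, swap_apply_eq_iff, swap_apply_left]
    exact hij.symm
  refine ⟨swap 0 i * swap 1 (swap 0 i j), ?_, ?_⟩
  · rw [Perm.mul_apply, swap_apply_of_ne_of_ne zero_ne_one hj.symm, swap_apply_left]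
  · rw [Perm.mul_apply, swap_apply_left, swap_apply_self]

namespace ShortPlucker

variable {n : ℕ} {H : (Fin (n + 2) → α) → K}

theorem const_mul (hH : ShortPlucker H) (c : K) : ShortPlucker fun γ => c * H γ :=
  fun δ s t c' d => by linear_combination c ^ 2 * hH δ s t c' d

theorem comp {β : Type*} (hH : ShortPlucker H) (v : β → α) :
    ShortPlucker fun γ : Fin (n + 2) → β => H (v ∘ γ) := fun δ s t c d => by
  simpa only [Fin.comp_cons] using hH (v ∘ δ) (v s) (v t) (v c) (v d)

theorem update_update (hA : IsAlternating H) (hP : ShortPlucker H) (γ : Fin (n + 2) → α)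
    {i j : Fin (n + 2)} (hij : i ≠ j) (s t c d : α) :
    H (update (update γ i s) j t) * H (update (update γ i c) j d)
      - H (update (update γ i s) j c) * H (update (update γ i t) j d)
      + H (update (update γ i s) j d) * H (update (update γ i t) j c) = 0 := by
  obtain ⟨σ, h0, h1⟩ := Fin.exists_perm_apply_zero_apply_one hij
  set δ : Fin n → α := fun k => γ (σ k.succ.succ)
  have hσ : ∀ a b, update (update γ i a) j b ∘ σ = Fin.cons a (Fin.cons b δ) := by
    intro a b
    funext k
    refine Fin.cases ?_ (fun k => Fin.cases ?_ (fun k => ?_) k) k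
    · rw [comp_apply, Fin.cons_zero, h0, update_of_ne hij, update_self]
    · rw [comp_apply, Fin.cons_succ, Fin.cons_zero, Fin.succ_zero_eq_one, h1, update_self]
    · have hi : σ k.succ.succ ≠ i := h0 ▸ σ.injective.ne (Fin.succ_ne_zero _)
      have hj : σ k.succ.succ ≠ j :=
        h1 ▸ σ.injective.ne ((Fin.succ_injective _).ne (Fin.succ_ne_zero _))
      rw [comp_apply, Fin.cons_succ, Fin.cons_succ, update_of_ne hj, update_of_ne hi]
  have hH : ∀ a b, H (update (update γ i a) j b)
      = (Perm.sign σ : ℤ) * H (Fin.cons a (Fin.cons b δ)) :=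
    fun a b => by rw [hA.apply_eq_sign_mul _ σ, hσ]
  simp only [hH]
  linear_combination ((Perm.sign σ : ℤ) : K) ^ 2 * hP δ s t c d

end ShortPlucker

end Alternating

namespace Matrix

variable {R : Type*} [CommRing R]

theorem sum_det_succAbove_smul_eq_zero {m : ℕ} (Y : Fin (m + 1) → Fin m → R) :
    ∑ i : Fin (m + 1), ((-1) ^ (i : ℕ) * (of fun j => Y (i.succAbove j)).det) • Y i = 0 := by
  funext r
  let C : Matrix (Fin (m + 1)) (Fin (m + 1)) R := of fun i => Fin.cons (Y i r) (Y i)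
  have hC : C.det = 0 := det_zero_of_column_eq (Fin.succ_ne_zero r).symm fun i => rfl
  have hminor : ∀ i : Fin (m + 1),
      C.submatrix i.succAbove Fin.succ = of fun j => Y (i.succAbove j) :=
    fun i => by ext; simp [C]
  rw [det_succ_column_zero] at hC
  simpa [hminor, C, mul_right_comm] using hC

theorem sum_det_succAbove_mul_eq_zero {m : ℕ} (Y : Fin (m + 1) → Fin m → R)
    (φ : (Fin m → R) →ₗ[R] R) :
    ∑ i : Fin (m + 1), (-1) ^ (i : ℕ) * (of fun j => Y (i.succAbove j)).det * φ (Y i) = 0 := by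
  simpa [mul_assoc] using congrArg φ (sum_det_succAbove_smul_eq_zero Y)

theorem det_plucker {n : ℕ} (B : Fin n → Fin (n + 1) → R) (V : Fin (n + 2) → Fin (n + 1) → R) :
    ∑ i : Fin (n + 2),
      (-1) ^ (i : ℕ) * (of (Fin.snoc B (V i))).det * (of fun j => V (i.succAbove j)).det = 0 := by
  have := sum_det_succAbove_mul_eq_zero V
    ((detRowAlternating : (Fin (n + 1) → R) [⋀^Fin (n + 1)]→ₗ[R] R).toMultilinearMap.toLinearMap
      (Fin.snoc B 0) (Fin.last n))
  simp only [MultilinearMap.toLinearMap_apply, Fin.update_snoc_last] at this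
  rw [← this]
  exact Finset.sum_congr rfl fun i _ => mul_right_comm _ _ _

theorem isAlternating_det {n : ℕ} : IsAlternating fun w : Fin n → Fin n → R => (of w).det where
  comp_perm w σ := det_permute σ (of w)
  eq_zero_of_not_injective w hw := by
    obtain ⟨i, j, hw, hij⟩ := Function.not_injective_iff.mp hw
    exact det_zero_of_row_eq hij hw

theorem shortPlucker_det {n : ℕ} :
    ShortPlucker fun w : Fin (n + 2) → Fin (n + 2) → R => (of w).det := by
  intro W s t c d
  -- The Laplace identity for the rows `t, c, d, W`, paired with the functional
  -- `a ↦ det (s, a, W)`, which vanishes on the rows of `W`.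
  let Y : Fin (n + 3) → Fin (n + 2) → R := Fin.cons t (Fin.cons c (Fin.cons d W))
  let φ :=
    (detRowAlternating : (Fin (n + 2) → R) [⋀^Fin (n + 2)]→ₗ[R] R).toMultilinearMap.toLinearMap
      (Fin.cons s (Fin.cons 0 W)) (0 : Fin (n + 1)).succ
  have hφ : ∀ a, φ a = (of (Fin.cons s (Fin.cons a W))).det := fun a => by
    simp only [φ, MultilinearMap.toLinearMap_apply, ← Fin.cons_update, Fin.update_cons_zero]
    rfl
  have hW : ∀ i : Fin n, φ (Y i.succ.succ.succ) = 0 := fun i => by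
    rw [hφ]
    exact det_zero_of_row_eq (i := (0 : Fin (n + 1)).succ) (j := i.succ.succ)
      ((Fin.succ_injective _).ne (Fin.succ_ne_zero _).symm) rfl
  have hminor0 : (fun j => Y ((0 : Fin (n + 3)).succAbove j)) = Fin.cons c (Fin.cons d W) := rfl
  have hminor1 : (fun j => Y ((0 : Fin (n + 2)).succ.succAbove j)) = Fin.cons t (Fin.cons d W) := by
    funext j
    refine Fin.cases rfl (fun j => ?_) j
    simp only [Fin.succ_succAbove_succ, Fin.succAbove_zero]
    rfl
  have hminor2 : (fun j => Y ((0 : Fin (n + 1)).succ.succ.succAbove j))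
      = Fin.cons t (Fin.cons c W) := by
    funext j
    refine Fin.cases rfl (fun j => Fin.cases rfl (fun j => ?_) j) j
    simp only [Fin.succ_succAbove_succ, Fin.succAbove_zero]
    rfl
  have := sum_det_succAbove_mul_eq_zero Y φ
  simp only [Fin.sum_univ_succ (n := n + 2), Fin.sum_univ_succ (n := n + 1),
    Fin.sum_univ_succ (n := n)] at this
  simp only [hW, mul_zero, Finset.sum_const_zero, add_zero, hminor0, hminor1, hminor2, hφ] at this
  simp only [Y, Fin.cons_zero, Fin.cons_succ, Fin.val_zero, Fin.val_succ] at this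
  linear_combination this

end Matrix

section Aligned

variable {ι α : Type*} {R : ι → α}

variable (R) in
def IsAligned (γ : ι → α) : Prop := ∀ i j, γ i = R j → i = j

namespace IsAligned

variable {γ : ι → α}

theorem apply_ne (hγ : IsAligned R γ) {i : ι} (hi : γ i ≠ R i) (j : ι) : γ i ≠ R j :=
  fun h => hi (hγ i j h ▸ h)

theorem update [DecidableEq ι] (hγ : IsAligned R γ) {i : ι} {a : α} (ha : ∀ j, a = R j → i = j) :
    IsAligned R (Function.update γ i a) := by
  intro k j h
  by_cases hki : k = i
  · subst hki
    rw [update_self] at h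
    exact ha j h
  · rw [update_of_ne hki] at h
    exact hγ k j h

theorem injective_update_self [DecidableEq ι] (hγ : IsAligned R γ) (hinj : Injective γ) (i : ι) :
    Injective (Function.update γ i (R i)) := by
  intro k l h
  by_cases hk : k = i <;> by_cases hl : l = i
  · rw [hk, hl]
  · rw [hk, update_self, update_of_ne hl] at h
    exact hk.trans (hγ l i h.symm).symm
  · rw [hl, update_self, update_of_ne hk] at h
    exact (hγ k i h).trans hl.symm
  · rw [update_of_ne hk, update_of_ne hl] at h
    exact hinj h

end IsAligned

theorem exists_perm_isAligned [Fintype ι] [Nonempty ι] (hR : Injective R) {γ : ι → α}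
    (hγ : Injective γ) : ∃ σ : Perm ι, IsAligned R (γ ∘ σ) := by
  obtain ⟨g, hg⟩ := Set.MapsTo.exists_equiv_extend_of_card_eq (t := Finset.univ)
    (s := {k | γ k ∈ Set.range R}) (f := invFun R ∘ γ) Finset.card_univ.symm
    (fun _ _ => Finset.mem_coe.mpr (Finset.mem_univ _))
    (fun k hk l hl h => hγ (by rw [← invFun_eq hk, ← invFun_eq hl]; exact congrArg R h))
  let π : Perm ι := g.trans (Equiv.subtypeUnivEquiv Finset.mem_univ)
  refine ⟨π.symm, fun i j h => ?_⟩
  have := hg _ (⟨j, h.symm⟩ : π.symm i ∈ {k | γ k ∈ Set.range R})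
  simp only [comp_apply] at h this
  rw [h, leftInverse_invFun hR j] at this
  exact (π.apply_symm_apply i).symm.trans this

end Aligned

section Mismatches

open Finset

variable {ι α : Type*} [Fintype ι] [DecidableEq α] {R : ι → α}

variable (R) in
def mismatches (γ : ι → α) : Finset ι := {i | γ i ≠ R i}

@[simp] theorem mem_mismatches {γ : ι → α} {i : ι} : i ∈ mismatches R γ ↔ γ i ≠ R i := by
  simp [mismatches]

theorem eq_update_of_card_mismatches_le_one [DecidableEq ι] [Nonempty ι] {γ : ι → α}
    (h : #(mismatches R γ) ≤ 1) : ∃ j, γ = update R j (γ j) := by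
  obtain ⟨j, hj⟩ := card_le_one_iff_subset_singleton.mp h
  refine ⟨j, funext fun k => ?_⟩
  by_cases hk : k = j
  · subst hk
    rw [update_self]
  · rw [update_of_ne hk]
    by_contra hne
    exact hk (mem_singleton.mp (hj (mem_mismatches.mpr hne)))

theorem card_mismatches_update_le [DecidableEq ι] {γ : ι → α} {i : ι} (hi : γ i ≠ R i) (a : α) :
    #(mismatches R (update γ i a)) ≤ #(mismatches R γ) := by
  refine card_le_card fun k hk => ?_
  rw [mem_mismatches] at hk ⊢
  by_cases hki : k = i
  · exact hki ▸ hi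
  · rwa [update_of_ne hki] at hk

theorem card_mismatches_update_self_lt [DecidableEq ι] {γ : ι → α} {i : ι} (hi : γ i ≠ R i) :
    #(mismatches R (update γ i (R i))) < #(mismatches R γ) := by
  refine card_lt_card ⟨fun k hk => ?_, fun h => ?_⟩
  · rw [mem_mismatches] at hk ⊢
    by_cases hki : k = i
    · exact hki ▸ hi
    · rwa [update_of_ne hki] at hk
  · simpa using h (mem_mismatches.mpr hi)

end Mismatches

section Uniqueness

open Finset

variable {α K : Type*} [DecidableEq α] [CommRing K] [IsDomain K] {n : ℕ} {R : Fin (n + 2) → α}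
  {F G : (Fin (n + 2) → α) → K}

theorem IsAligned.apply_eq_of_forall_card_mismatches_lt (hR : Injective R)
    (hF : IsAlternating F) (hFP : ShortPlucker F) (hG : IsAlternating G) (hGP : ShortPlucker G)
    (hF0 : ∀ γ, Injective γ → F γ ≠ 0) {γ : Fin (n + 2) → α} (hγ : IsAligned R γ)
    (hinj : Injective γ) {i₁ i₂ : Fin (n + 2)} (hne : i₁ ≠ i₂) (h₁ : γ i₁ ≠ R i₁)
    (h₂ : γ i₂ ≠ R i₂)
    (ih : ∀ γ', IsAligned R γ' → #(mismatches R γ') < #(mismatches R γ) → F γ' = G γ') :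
    F γ = G γ := by
  set u : α → α → Fin (n + 2) → α := fun a b => Function.update (Function.update γ i₁ a) i₂ b
    with hu
  have hγu : γ = u (γ i₁) (γ i₂) := by simp [u]
  have hc : ∀ b, (∀ j, b ≠ R j) → F (u (R i₁) b) = G (u (R i₁) b) := fun b hb =>
    ih _ ((hγ.update fun j h => hR h).update fun j h => absurd h (hb j))
      ((card_mismatches_update_le (by rwa [update_of_ne hne.symm]) b).trans_lt
        (card_mismatches_update_self_lt h₁))
  have hd : ∀ a, (∀ j, a ≠ R j) → F (u a (R i₂)) = G (u a (R i₂)) := fun a ha =>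
    ih _ ((hγ.update fun j h => absurd h (ha j)).update fun j h => hR h)
      ((card_mismatches_update_self_lt (by rwa [update_of_ne hne.symm])).trans_le
        (card_mismatches_update_le h₁ a))
  have hcd : F (u (R i₁) (R i₂)) = G (u (R i₁) (R i₂)) :=
    ih _ ((hγ.update fun j h => hR h).update fun j h => hR h)
      ((card_mismatches_update_self_lt (by rwa [update_of_ne hne.symm])).trans
        (card_mismatches_update_self_lt h₁))
  have hpivot : F (u (R i₁) (R i₂)) ≠ 0 :=
    hF0 _ ((hγ.update fun j h => hR h).injective_update_self
      (hγ.injective_update_self hinj i₁) i₂)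
  -- With `R i₁` in slot `i₁` and `R i₂` in slot `i₂`, every term of this relation other than
  -- `F γ` has fewer mismatches than `γ`.
  have eF := hFP.update_update hF γ hne (R i₁) (γ i₁) (γ i₂) (R i₂)
  have eG := hGP.update_update hG γ hne (R i₁) (γ i₁) (γ i₂) (R i₂)
  have hs := hγ.apply_ne h₁
  have ht := hγ.apply_ne h₂
  rw [hc _ hs, hc _ ht, hd _ hs, hd _ ht, hcd] at eF
  rw [hγu]
  refine mul_right_cancel₀ hpivot ?_
  rw [hcd]
  simp only [hu] at eF ⊢
  linear_combination eF - eG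

theorem IsAlternating.eq_of_shortPlucker (hR : Injective R) (hF : IsAlternating F)
    (hFP : ShortPlucker F) (hG : IsAlternating G) (hGP : ShortPlucker G)
    (hF0 : ∀ γ, Injective γ → F γ ≠ 0) (hbase : ∀ j a, F (update R j a) = G (update R j a)) :
    F = G := by
  have haligned : ∀ γ, IsAligned R γ → F γ = G γ := by
    intro γ
    induction hk : #(mismatches R γ) using Nat.strong_induction_on generalizing γ with
    | _ k ih =>
    intro hγ
    by_cases hinj : Injective γ
    swap
    · rw [hF.eq_zero_of_not_injective γ hinj, hG.eq_zero_of_not_injective γ hinj]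
    rcases le_or_gt k 1 with hk1 | hk1
    · obtain ⟨j, hj⟩ := eq_update_of_card_mismatches_le_one (hk ▸ hk1)
      rw [hj]
      exact hbase j (γ j)
    · obtain ⟨i₁, h₁, i₂, h₂, hne⟩ := one_lt_card.mp (hk ▸ hk1)
      exact hγ.apply_eq_of_forall_card_mismatches_lt hR hF hFP hG hGP hF0 hinj hne
        (mem_mismatches.mp h₁) (mem_mismatches.mp h₂) fun γ' hγ' hlt => ih _ (hk ▸ hlt) γ' rfl hγ'
  funext γ
  by_cases hinj : Injective γ
  · obtain ⟨σ, hσ⟩ := exists_perm_isAligned hR hinj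
    rw [hF.apply_eq_sign_mul γ σ, hG.apply_eq_sign_mul γ σ, haligned _ hσ]
  · rw [hF.eq_zero_of_not_injective γ hinj, hG.eq_zero_of_not_injective γ hinj]

end Uniqueness

section KP

open Finset Matrix

theorem Vand_eq_det {n : ℕ} (γ : Fin n → ℂ) :
    Vand γ = (-1) ^ (∑ i : Fin n, #(Ioi i)) * (vandermonde γ).det := by
  rw [det_vandermonde, Vand, ← prod_pow_eq_pow_sum, ← prod_mul_distrib]
  refine prod_congr rfl fun i _ => ?_
  rw [← prod_const, ← prod_mul_distrib]
  exact prod_congr rfl fun j _ => by ring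

theorem Vand_eq_zero_iff {n : ℕ} {γ : Fin n → ℂ} : Vand γ = 0 ↔ ¬ Injective γ := by
  rw [Vand_eq_det, mul_eq_zero, ← det_vandermonde_ne_zero_iff, not_not]
  simp

theorem Vand_comp_perm {n : ℕ} (γ : Fin n → ℂ) (σ : Perm (Fin n)) :
    Vand (γ ∘ σ) = (Perm.sign σ : ℤ) * Vand γ := by
  have h : vandermonde (γ ∘ σ) = (vandermonde γ).submatrix σ id := by
    ext i j
    simp [vandermonde]
  rw [Vand_eq_det, Vand_eq_det, h, det_permute]
  ring

theorem Vand_cons {n : ℕ} (a : ℂ) (γ : Fin n → ℂ) :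
    Vand (Fin.cons a γ) = (∏ i, (a - γ i)) * Vand γ := by
  rw [Vand, Fin.prod_univ_succ, Fin.prod_Ioi_zero]
  simp_rw [Fin.prod_Ioi_succ, Fin.cons_zero, Fin.cons_succ]
  rfl

theorem isAlternating_zeta (τ : TSeq → ℂ) (x : TSeq) {n : ℕ} :
    IsAlternating (zeta τ x (n := n)) where
  comp_perm γ σ := by
    rw [zeta, zeta, Vand_comp_perm, mul_assoc,
      Fintype.sum_equiv σ (fun i => ch ((γ ∘ σ) i)) (fun i => ch (γ i)) fun i => rfl]
  eq_zero_of_not_injective γ hγ := by rw [zeta, Vand_eq_zero_iff.mpr hγ, zero_mul]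

theorem zeta_ne_zero {τ : TSeq → ℂ} (hτ : ∀ y, τ y ≠ 0) (x : TSeq) {n : ℕ} {γ : Fin n → ℂ}
    (hγ : Injective γ) : zeta τ x γ ≠ 0 :=
  mul_ne_zero (mt Vand_eq_zero_iff.mp (not_not.mpr hγ)) (hτ _)

theorem zeta_cons (τ : TSeq → ℂ) (x : TSeq) {n : ℕ} (a : ℂ) (γ : Fin n → ℂ) :
    zeta τ x (Fin.cons a γ) = (∏ i, (a - γ i)) * zeta τ (x + ch a) γ := by
  rw [zeta, zeta, Vand_cons, Fin.sum_univ_succ, Fin.cons_zero]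
  simp only [Fin.cons_succ, add_assoc, mul_assoc]

theorem zeta_cons_cons (τ : TSeq → ℂ) (x : TSeq) {n : ℕ} (a b : ℂ) (δ : Fin n → ℂ) :
    zeta τ x (Fin.cons a (Fin.cons b δ)) = (∏ i, (a - δ i)) * (∏ i, (b - δ i)) * Vand δ *
      ((a - b) * τ (x + ∑ i, ch (δ i) + ch a + ch b)) := by
  rw [zeta_cons, zeta_cons, Fin.prod_univ_succ, zeta, add_right_comm (x + ch a) (ch b),
    add_right_comm x (ch a)]
  simp only [Fin.cons_zero, Fin.cons_succ]
  ring

theorem shortPlucker_zeta {τ : TSeq → ℂ} (h3 : ThreeTerm τ) (x : TSeq) {n : ℕ} :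
    ShortPlucker (zeta τ x (n := n + 2)) := fun δ s t c d => by
  simp only [zeta_cons_cons]
  linear_combination (Vand δ ^ 2 * (∏ i, (s - δ i)) * (∏ i, (t - δ i)) * (∏ i, (c - δ i)) *
    (∏ i, (d - δ i))) * h3 (x + ∑ i, ch (δ i)) s t c d

theorem exists_zeta_eq_mul_det {τ : TSeq → ℂ} (hτ : ∀ y, τ y ≠ 0) (h3 : ThreeTerm τ) (x : TSeq)
    (n : ℕ) : ∃ (N : ℂ) (v : ℂ → Fin (n + 2) → ℂ),
      ∀ γ : Fin (n + 2) → ℂ, zeta τ x γ = N * (of (v ∘ γ)).det := by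
  let R : Fin (n + 2) → ℂ := fun i => (i : ℕ)
  have hR : Injective R := Nat.cast_injective.comp Fin.val_injective
  let N := zeta τ x R
  have hN : N ≠ 0 := zeta_ne_zero hτ x hR
  let v : ℂ → Fin (n + 2) → ℂ := fun a j => zeta τ x (update R j a) / N
  have hvR : ∀ i, v (R i) = (1 : Matrix (Fin (n + 2)) (Fin (n + 2)) ℂ) i := fun i => by
    funext j
    by_cases hji : j = i
    · subst hji
      simp [v, N, div_self hN]
    · rw [one_apply_ne' hji, div_eq_zero_iff]
      refine Or.inl ((isAlternating_zeta τ x).eq_zero_of_not_injective _ fun hinj => hji (hinj ?_))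
      rw [update_self, update_of_ne (Ne.symm hji)]
  have hbase : ∀ j a, N⁻¹ * zeta τ x (update R j a) = (of (v ∘ update R j a)).det := by
    intro j a
    have hrows : of (v ∘ update R j a)
        = (1 : Matrix (Fin (n + 2)) (Fin (n + 2)) ℂ).updateRow j (v a) := by
      ext i l
      by_cases hij : i = j
      · subst hij
        simp
      · simp [updateRow_ne hij, update_of_ne hij, hvR]
    rw [hrows, ← cramer_transpose_apply, transpose_one, cramer_one, inv_mul_eq_div]
    rfl
  refine ⟨N, v, fun γ => ?_⟩
  have := congrFun (((isAlternating_zeta τ x).const_mul N⁻¹).eq_of_shortPlucker hR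
    ((shortPlucker_zeta h3 x).const_mul N⁻¹) (isAlternating_det.comp v) (shortPlucker_det.comp v)
    (fun γ hγ => mul_ne_zero (inv_ne_zero hN) (zeta_ne_zero hτ x hγ)) hbase) γ
  rw [← this, mul_inv_cancel_left₀ hN]

theorem kpAdd_of_threeTerm {τ : TSeq → ℂ} (hτ : ∀ y, τ y ≠ 0) (h3 : ThreeTerm τ) {m : ℕ}
    (hm : 2 ≤ m) (x : TSeq) (α : Fin (m + 1) → ℂ) (β : Fin (m - 1) → ℂ) : KPAdd τ m x α β := by
  obtain ⟨n, rfl⟩ := Nat.exists_eq_add_of_le' hm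
  obtain ⟨N, v, hv⟩ := exists_zeta_eq_mul_det hτ h3 x n
  have hterm : ∀ i : Fin (n + 3), (-1) ^ (i : ℕ) * zeta τ x (Fin.snoc β (α i))
      * zeta τ x (fun j => α (i.succAbove j)) = N ^ 2 * ((-1) ^ (i : ℕ)
        * (of (Fin.snoc (v ∘ β) (v (α i)))).det * (of (v ∘ fun j => α (i.succAbove j))).det) :=
    fun i => by rw [hv, hv, Fin.comp_snoc]; ring
  rw [KPAdd, Finset.sum_congr rfl fun i _ => hterm i, ← mul_sum]
  exact mul_eq_zero_of_right _ (det_plucker (v ∘ β) (v ∘ α))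

theorem zeta_pair (τ : TSeq → ℂ) (x : TSeq) (γ : Fin 2 → ℂ) :
    zeta τ x γ = (γ 0 - γ 1) * τ (x + ch (γ 0) + ch (γ 1)) := by
  rw [← Fin.cons_self_tail γ, ← Fin.cons_self_tail (Fin.tail γ), zeta_cons_cons]
  simp [Vand, Fin.tail]

theorem kpAdd_two_iff (τ : TSeq → ℂ) (x : TSeq) (a₁ a₂ a₃ a₄ : ℂ) :
    KPAdd τ 2 x ![a₂, a₃, a₄] ![a₁] ↔
      (a₁ - a₂) * (a₃ - a₄) * τ (x + ch a₁ + ch a₂) * τ (x + ch a₃ + ch a₄)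
      - (a₁ - a₃) * (a₂ - a₄) * τ (x + ch a₁ + ch a₃) * τ (x + ch a₂ + ch a₄)
      + (a₁ - a₄) * (a₂ - a₃) * τ (x + ch a₁ + ch a₄) * τ (x + ch a₂ + ch a₃) = 0 := by
  have h21 : Fin.succAbove (2 : Fin 3) 1 = 1 := rfl
  rw [KPAdd, Fin.sum_univ_three]
  simp [zeta_pair, h21, sub_eq_add_neg, mul_comm, mul_left_comm, mul_assoc]

theorem threeTerm_of_kpAdd_two {τ : TSeq → ℂ}
    (h : ∀ x (α : Fin 3 → ℂ) (β : Fin 1 → ℂ), Injective α → Injective β → (∀ i j, β i ≠ α j) →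
      KPAdd τ 2 x α β) :
    ThreeTerm τ := by
  intro x a₁ a₂ a₃ a₄
  by_cases hdist : a₁ ≠ a₂ ∧ a₁ ≠ a₃ ∧ a₁ ≠ a₄ ∧ a₂ ≠ a₃ ∧ a₂ ≠ a₄ ∧ a₃ ≠ a₄
  · obtain ⟨h₁₂, h₁₃, h₁₄, h₂₃, h₂₄, h₃₄⟩ := hdist
    refine (kpAdd_two_iff τ x a₁ a₂ a₃ a₄).mp
      (h x _ _ ?_ (injective_of_subsingleton _) ?_)
    · intro i j
      fin_cases i <;> fin_cases j <;> simp [h₂₃, h₂₄, h₃₄, h₂₃.symm, h₂₄.symm, h₃₄.symm]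
    · simp [Fin.forall_fin_succ, h₁₂, h₁₃, h₁₄]
  · have hT : ∀ a b, τ (x + ch a + ch b) = τ (x + ch b + ch a) := fun a b => by
      rw [add_right_comm]
    simp only [not_and_or, not_not] at hdist
    rcases hdist with rfl | rfl | rfl | rfl | rfl | rfl
    · ring
    · rw [hT a₂ a₁]; ring
    · rw [hT a₃ a₁, hT a₂ a₁]; ring
    · ring
    · rw [hT a₃ a₂]; ring
    · ring

end KP

/-- The KP hierarchy (in the form of the three-term equation) is equivalent to the
totality of its addition formulae. -/
theorem KP_threeTerm_iff_additionFormulae (τ : TSeq → ℂ) (hτ : ∀ x, τ x ≠ 0) :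
    ThreeTerm τ ↔
      ∀ (m : ℕ), 2 ≤ m → ∀ (x : TSeq) (α : Fin (m+1) → ℂ) (β : Fin (m-1) → ℂ),
        Function.Injective α → Function.Injective β →
        (∀ i j, β i ≠ α j) → KPAdd τ m x α β :=
  ⟨fun h3 _ hm x α β _ _ _ => kpAdd_of_threeTerm hτ h3 hm x α β,
    fun h => threeTerm_of_kpAdd_two (h 2 le_rfl)⟩
end
end

section
/- (Proposition 2) Let τ : (ℕ≥1 → ℂ) → ℂ be a nowhere-vanishing function satisfying the three-term equation. Then for every integer m ≥ 2, every x : ℕ≥1 → ℂ, all pairwise distinct α₁, …, α_m ∈ ℂ and all pairwise distinct β₁, …, β_m ∈ ℂ with βᵢ ≠ αⱼ for all i, j, the determinant formula of order m holds: τ(x + Σ_{i=1}^m [βᵢ] − Σ_{i=1}^m [αᵢ]) / τ(x) = ( ∏_{i,j=1}^m (βᵢ−αⱼ) / ∏_{i<j} (αᵢ−αⱼ)(βⱼ−βᵢ) ) · det( τ(x+[βᵢ]−[αⱼ]) / ((βᵢ−αⱼ)τ(x)) )_{1≤i,j≤m}. -/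
/-!
Induction on `m` in steps of two, peeling off `α₀, α₁, β₀, β₁`. By the Desnanot–Jacobi identity
(a Schur complement computation) the determinant on the right, times the determinant of order
`m` without these four parameters, equals `D₀₀ D₁₁ − D₁₀ D₀₁`, where `D_{pq}` keeps `αₚ` and `β_q`
only. Since `cauchyFactor α β` is the reciprocal of the Cauchy determinant `det (1 / (βᵢ − αⱼ))`,
after dividing out these factors the left side obeys the same recursion, which is exactly the
three-term equation at the point `x + Σ_{i ≥ 2} [βᵢ] − Σ [αᵢ]`. As `τ` never vanishes, the
determinant of order `m` is nonzero and can be cancelled.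
-/

open scoped BigOperators

noncomputable section

/-- The determinant formula of order `m` for the KP τ-function at `x`:
`τ(x + Σ[βᵢ] − Σ[αᵢ])/τ(x) = (∏_{i,j}(βᵢ−αⱼ) / ∏_{i<j}(αᵢ−αⱼ)(βⱼ−βᵢ)) ·
det( τ(x+[βᵢ]−[αⱼ]) / ((βᵢ−αⱼ)τ(x)) )`. -/
def KPDet (τ : TSeq → ℂ) (m : ℕ) (x : TSeq) (α β : Fin m → ℂ) : Prop :=
  τ (x + ∑ i, ch (β i) - ∑ i, ch (α i)) / τ x =
    (∏ i, ∏ j, (β i - α j)) /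
      ((∏ i, ∏ j ∈ Finset.Ioi i, (α i - α j)) * (∏ i, ∏ j ∈ Finset.Ioi i, (β j - β i))) *
    Matrix.det (Matrix.of fun i j : Fin m => τ (x + ch (β i) - ch (α j)) / ((β i - α j) * τ x))

namespace Matrix

variable {R : Type*} [CommRing R]

def fromBlocksCorner {n : Type*} (A : Matrix (Fin 2) (Fin 2) R) (B : Matrix (Fin 2) n R)
    (C : Matrix n (Fin 2) R) (D : Matrix n n R) (i j : Fin 2) :
    Matrix (Fin 1 ⊕ n) (Fin 1 ⊕ n) R :=
  fromBlocks (of fun _ _ => A i j) (of fun _ c => B i c) (of fun r _ => C r j) D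

theorem det_fromBlocks_mul_det {n : Type*} [Fintype n] [DecidableEq n]
    (A : Matrix (Fin 2) (Fin 2) R) (B : Matrix (Fin 2) n R)
    (C : Matrix n (Fin 2) R) (D : Matrix n n R) (hD : IsUnit D.det) :
    (fromBlocks A B C D).det * D.det =
      (fromBlocksCorner A B C D 0 0).det * (fromBlocksCorner A B C D 1 1).det -
        (fromBlocksCorner A B C D 0 1).det * (fromBlocksCorner A B C D 1 0).det := by
  have := D.invertibleOfIsUnitDet hD
  have corner (i j : Fin 2) :
      (fromBlocksCorner A B C D i j).det = D.det * (A - B * ⅟D * C) i j := by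
    rw [fromBlocksCorner, det_fromBlocks₂₂, det_fin_one]
    simp [Matrix.sub_apply, mul_apply, Finset.sum_mul]
  rw [det_fromBlocks₂₂, det_fin_two, corner, corner, corner, corner]
  ring

def pairMatrix {ι β γ : Type*} (g : β → γ → R) (b : ι → β) (a : ι → γ) : Matrix ι ι R :=
  of fun i j => g (b i) (a j)

def finSumFinEquiv' (k m : ℕ) : Fin k ⊕ Fin m ≃ Fin (m + k) :=
  finSumFinEquiv.trans (finCongr (Nat.add_comm k m))

@[simp] lemma finSumFinEquiv'_inl_zero (k m : ℕ) : finSumFinEquiv' (k + 1) m (Sum.inl 0) = 0 := rfl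

@[simp] lemma finSumFinEquiv'_inl_one (k m : ℕ) :
    finSumFinEquiv' (k + 2) m (Sum.inl 1) = 1 := by
  ext
  simp only [finSumFinEquiv', Equiv.trans_apply, finSumFinEquiv_apply_left, finCongr_apply,
    Fin.val_cast, Fin.val_castAdd, Fin.val_one]

@[simp] lemma finSumFinEquiv'_inr_succ (k m : ℕ) (j : Fin m) :
    finSumFinEquiv' (k + 1) m (Sum.inr j) = (finSumFinEquiv' k m (Sum.inr j)).succ := by
  ext
  simp only [finSumFinEquiv', Equiv.trans_apply, finSumFinEquiv_apply_right, finCongr_apply,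
    Fin.cast_natAdd, Fin.val_addNat, Fin.val_succ]
  omega

@[simp] lemma finSumFinEquiv'_zero_inr (m : ℕ) (j : Fin m) :
    finSumFinEquiv' 0 m (Sum.inr j) = j := by
  ext; simp [finSumFinEquiv']

theorem det_pairMatrix_cons_cons_mul_det {β γ : Type*} {m : ℕ} (g : β → γ → R)
    (b₀ b₁ : β) (b : Fin m → β) (a₀ a₁ : γ) (a : Fin m → γ)
    (h : IsUnit (pairMatrix g b a).det) :
    (pairMatrix g (Fin.cons b₀ (Fin.cons b₁ b)) (Fin.cons a₀ (Fin.cons a₁ a))).det *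
        (pairMatrix g b a).det =
      (pairMatrix g (Fin.cons b₀ b) (Fin.cons a₀ a)).det *
          (pairMatrix g (Fin.cons b₁ b) (Fin.cons a₁ a)).det -
        (pairMatrix g (Fin.cons b₀ b) (Fin.cons a₁ a)).det *
          (pairMatrix g (Fin.cons b₁ b) (Fin.cons a₀ a)).det := by
  have corner (b' : β) (a' : γ) (i j : Fin 2) (hb : b' = ![b₀, b₁] i) (ha : a' = ![a₀, a₁] j) :
      (pairMatrix g (Fin.cons b' b) (Fin.cons a' a)).det =
        (fromBlocksCorner (pairMatrix g ![b₀, b₁] ![a₀, a₁]) (of fun i c => g (![b₀, b₁] i) (a c))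
          (of fun r j => g (b r) (![a₀, a₁] j)) (pairMatrix g b a) i j).det := by
    rw [← det_submatrix_equiv_self (finSumFinEquiv' 1 m)]
    congr 1
    ext (r | r) (c | c) <;> simp [fromBlocksCorner, pairMatrix, Fin.fin_one_eq_zero, hb, ha]
  rw [← det_submatrix_equiv_self (finSumFinEquiv' 2 m), corner b₀ a₀ 0 0 rfl rfl,
    corner b₁ a₁ 1 1 rfl rfl, corner b₀ a₁ 0 1 rfl rfl, corner b₁ a₀ 1 0 rfl rfl,
    ← det_fromBlocks_mul_det _ _ _ _ h]
  congr 2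
  ext (r | r) (c | c)
  · fin_cases r <;> fin_cases c <;> simp [pairMatrix]
  · fin_cases r <;> simp [pairMatrix]
  · fin_cases c <;> simp [pairMatrix]
  · simp [pairMatrix]

end Matrix

open Finset Function Matrix

theorem Fin.cons_cons_comp_succAbove_one {α : Type*} {n : ℕ} (x y : α) (v : Fin n → α) :
    (Fin.cons x (Fin.cons y v) : Fin (n + 2) → α) ∘ Fin.succAbove 1 = Fin.cons x v := by
  ext i
  cases i using Fin.cases <;> simp

variable {m : ℕ}

def tauRatio (τ : TSeq → ℂ) (x : TSeq) (α β : Fin m → ℂ) : ℂ :=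
  τ (x + ∑ i, ch (β i) - ∑ i, ch (α i)) / τ x

def cauchyFactor (α β : Fin m → ℂ) : ℂ :=
  (∏ i, ∏ j, (β i - α j)) /
    ((∏ i, ∏ j ∈ Ioi i, (α i - α j)) * (∏ i, ∏ j ∈ Ioi i, (β j - β i)))

def tauKernel (τ : TSeq → ℂ) (x : TSeq) (b a : ℂ) : ℂ :=
  τ (x + ch b - ch a) / ((b - a) * τ x)

theorem kpDet_iff (τ : TSeq → ℂ) (x : TSeq) (α β : Fin m → ℂ) :
    KPDet τ m x α β ↔
      tauRatio τ x α β = cauchyFactor α β * (pairMatrix (tauKernel τ x) β α).det :=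
  Iff.rfl

theorem cauchyFactor_cons (a b : ℂ) (α β : Fin m → ℂ) :
    cauchyFactor (Fin.cons a α) (Fin.cons b β) =
      cauchyFactor α β * ((b - a) * (∏ j, (b - α j)) * ∏ i, (β i - a)) /
        ((∏ j, (a - α j)) * ∏ i, (β i - b)) := by
  simp only [cauchyFactor, Fin.prod_univ_succ, Fin.prod_Ioi_zero, Fin.prod_Ioi_succ,
    Fin.cons_zero, Fin.cons_succ, prod_mul_distrib]
  ring

theorem cauchyFactor_cons_cons {a₀ a₁ b₀ b₁ : ℂ} (ha : a₀ ≠ a₁) (hb : b₀ ≠ b₁)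
    (α β : Fin m → ℂ) :
    cauchyFactor (Fin.cons a₀ (Fin.cons a₁ α)) (Fin.cons b₀ (Fin.cons b₁ β)) *
        cauchyFactor α β * ((a₀ - a₁) * (b₁ - b₀)) =
      cauchyFactor (Fin.cons a₀ α) (Fin.cons b₀ β) *
        cauchyFactor (Fin.cons a₁ α) (Fin.cons b₁ β) * ((b₀ - a₁) * (b₁ - a₀)) := by
  have ha' : a₀ - a₁ ≠ 0 := sub_ne_zero.2 ha
  have hb' : b₁ - b₀ ≠ 0 := sub_ne_zero.2 hb.symm
  rw [cauchyFactor_cons a₀ b₀, cauchyFactor_cons a₀ b₀]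
  simp only [Fin.prod_univ_succ, Fin.cons_zero, Fin.cons_succ]
  field_simp

theorem cauchyFactor_cons_swap (a₀ a₁ b₀ b₁ : ℂ) (α β : Fin m → ℂ) :
    cauchyFactor (Fin.cons a₁ α) (Fin.cons b₀ β) *
        cauchyFactor (Fin.cons a₀ α) (Fin.cons b₁ β) * ((b₀ - a₀) * (b₁ - a₁)) =
      cauchyFactor (Fin.cons a₀ α) (Fin.cons b₀ β) *
        cauchyFactor (Fin.cons a₁ α) (Fin.cons b₁ β) * ((b₀ - a₁) * (b₁ - a₀)) := by
  simp only [cauchyFactor_cons]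
  ring

theorem ThreeTerm.tauRatio_cons_cons {τ : TSeq → ℂ} (h3 : ThreeTerm τ) (x : TSeq)
    (a₀ a₁ b₀ b₁ : ℂ) (α β : Fin m → ℂ) :
    (a₀ - a₁) * (b₁ - b₀) *
        tauRatio τ x (Fin.cons a₀ (Fin.cons a₁ α)) (Fin.cons b₀ (Fin.cons b₁ β)) *
        tauRatio τ x α β =
      (b₀ - a₁) * (b₁ - a₀) * tauRatio τ x (Fin.cons a₀ α) (Fin.cons b₀ β) *
          tauRatio τ x (Fin.cons a₁ α) (Fin.cons b₁ β) -
        (b₀ - a₀) * (b₁ - a₁) * tauRatio τ x (Fin.cons a₁ α) (Fin.cons b₀ β) *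
          tauRatio τ x (Fin.cons a₀ α) (Fin.cons b₁ β) := by
  have h := h3 (x + ∑ i, ch (β i) - ∑ i, ch (α i) - ch a₀ - ch a₁) b₀ b₁ a₀ a₁
  simp only [tauRatio, Fin.sum_univ_succ, Fin.cons_zero, Fin.cons_succ]
  abel_nf at h ⊢
  linear_combination -h / τ x ^ 2

theorem kpDet_zero {τ : TSeq → ℂ} {x : TSeq} (hx : τ x ≠ 0) (α β : Fin 0 → ℂ) :
    KPDet τ 0 x α β := by
  simp [KPDet, hx]

theorem kpDet_one {τ : TSeq → ℂ} {x : TSeq} (hx : τ x ≠ 0) {α β : Fin 1 → ℂ}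
    (h : β 0 ≠ α 0) : KPDet τ 1 x α β := by
  have h' : β 0 - α 0 ≠ 0 := sub_ne_zero.2 h
  simp only [KPDet, univ_unique, Fin.default_eq_zero, sum_singleton, prod_singleton,
    isMax_iff_eq_top, Fin.zero_eq_top, IsMax.finsetIoi_eq, prod_empty, mul_one, div_one,
    det_unique, of_apply]
  field_simp

theorem kpDet_cons_cons {τ : TSeq → ℂ} (hτ : ∀ x, τ x ≠ 0) (h3 : ThreeTerm τ) {x : TSeq}
    {a₀ a₁ b₀ b₁ : ℂ} (ha : a₀ ≠ a₁) (hb : b₀ ≠ b₁) {α β : Fin m → ℂ}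
    (h : KPDet τ m x α β)
    (h₀₀ : KPDet τ (m + 1) x (Fin.cons a₀ α) (Fin.cons b₀ β))
    (h₁₁ : KPDet τ (m + 1) x (Fin.cons a₁ α) (Fin.cons b₁ β))
    (h₁₀ : KPDet τ (m + 1) x (Fin.cons a₁ α) (Fin.cons b₀ β))
    (h₀₁ : KPDet τ (m + 1) x (Fin.cons a₀ α) (Fin.cons b₁ β)) :
    KPDet τ (m + 2) x (Fin.cons a₀ (Fin.cons a₁ α)) (Fin.cons b₀ (Fin.cons b₁ β)) := by
  rw [kpDet_iff] at *
  have hT : tauRatio τ x α β ≠ 0 := div_ne_zero (hτ _) (hτ x)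
  have hD : IsUnit (pairMatrix (tauKernel τ x) β α).det :=
    isUnit_iff_ne_zero.2 (right_ne_zero_of_mul (h ▸ hT))
  have hc : (a₀ - a₁) * (b₁ - b₀) * tauRatio τ x α β ≠ 0 :=
    mul_ne_zero (mul_ne_zero (sub_ne_zero.2 ha) (sub_ne_zero.2 hb.symm)) hT
  refine mul_left_cancel₀ hc ?_
  set A₀ : Fin (m + 1) → ℂ := Fin.cons a₀ α
  set A₁ : Fin (m + 1) → ℂ := Fin.cons a₁ α
  set B₀ : Fin (m + 1) → ℂ := Fin.cons b₀ β
  set B₁ : Fin (m + 1) → ℂ := Fin.cons b₁ β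
  set K := tauKernel τ x
  calc (a₀ - a₁) * (b₁ - b₀) * tauRatio τ x α β * tauRatio τ x _ _
      = (b₀ - a₁) * (b₁ - a₀) * tauRatio τ x A₀ B₀ * tauRatio τ x A₁ B₁
        - (b₀ - a₀) * (b₁ - a₁) * tauRatio τ x A₁ B₀ * tauRatio τ x A₀ B₁ := by
        rw [← h3.tauRatio_cons_cons]; ring
    _ = cauchyFactor A₀ B₀ * cauchyFactor A₁ B₁ * ((b₀ - a₁) * (b₁ - a₀)) *
          ((pairMatrix K B₀ A₀).det * (pairMatrix K B₁ A₁).det -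
            (pairMatrix K B₀ A₁).det * (pairMatrix K B₁ A₀).det) := by
        rw [h₀₀, h₁₁, h₁₀, h₀₁]
        linear_combination (-(pairMatrix K B₀ A₁).det * (pairMatrix K B₁ A₀).det) *
          cauchyFactor_cons_swap a₀ a₁ b₀ b₁ α β
    _ = cauchyFactor (Fin.cons a₀ A₁) (Fin.cons b₀ B₁) * cauchyFactor α β *
          ((a₀ - a₁) * (b₁ - b₀)) *
          ((pairMatrix K (Fin.cons b₀ B₁) (Fin.cons a₀ A₁)).det * (pairMatrix K β α).det) := by
        rw [cauchyFactor_cons_cons ha hb, det_pairMatrix_cons_cons_mul_det _ _ _ _ _ _ _ hD]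
    _ = _ := by
        rw [h]; ring

/-- Proposition 2: the three-term equation implies the determinant formulae of all
orders `m ≥ 2`. -/
theorem KP_threeTerm_implies_determinantFormula (τ : TSeq → ℂ) (hτ : ∀ x, τ x ≠ 0)
    (h3 : ThreeTerm τ) :
    ∀ (m : ℕ), 2 ≤ m → ∀ (x : TSeq) (α β : Fin m → ℂ),
      Function.Injective α → Function.Injective β →
      (∀ i j, β i ≠ α j) → KPDet τ m x α β := by
  rintro m -
  induction m using Nat.twoStepInduction with
  | zero => exact fun x α β _ _ _ => kpDet_zero (hτ x) α β
  | one => exact fun x α β _ _ hαβ => kpDet_one (hτ x) (hαβ 0 0)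
  | more m ih ih₁ =>
    intro x α β hα hβ hαβ
    cases α using Fin.consCases with | cons a₀ α => ?_
    cases α using Fin.consCases with | cons a₁ α => ?_
    cases β using Fin.consCases with | cons b₀ β => ?_
    cases β using Fin.consCases with | cons b₁ β => ?_
    have restrict {k : ℕ} (ih : ∀ (x : TSeq) (α β : Fin k → ℂ), Injective α → Injective β →
        (∀ i j, β i ≠ α j) → KPDet τ k x α β) {e f : Fin k → Fin (m + 2)}
        (he : Injective e) (hf : Injective f) {α' β' : Fin k → ℂ}
        (hα' : Fin.cons a₀ (Fin.cons a₁ α) ∘ e = α') (hβ' : Fin.cons b₀ (Fin.cons b₁ β) ∘ f = β') :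
        KPDet τ k x α' β' :=
      hα' ▸ hβ' ▸ ih x _ _ (hα.comp he) (hβ.comp hf) fun _ _ => hαβ _ _
    have e₁ := Fin.succAbove_right_injective (p := (1 : Fin (m + 2)))
    have e₂ := Fin.succ_injective (m + 1)
    have e₂₂ := e₂.comp (Fin.succ_injective m)
    have hα₁ := Fin.cons_cons_comp_succAbove_one a₀ a₁ α
    have hβ₁ := Fin.cons_cons_comp_succAbove_one b₀ b₁ β
    exact kpDet_cons_cons hτ h3 (hα.ne (Fin.succ_ne_zero 0).symm) (hβ.ne (Fin.succ_ne_zero 0).symm)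
      (restrict ih e₂₂ e₂₂ rfl rfl) (restrict ih₁ e₁ e₁ hα₁ hβ₁) (restrict ih₁ e₂ e₂ rfl rfl)
      (restrict ih₁ e₂ e₁ rfl hβ₁) (restrict ih₁ e₁ e₂ hα₁ rfl)
end
end

section
/- (Proposition 3) Let τ : (ℕ≥1 → ℂ) → ℂ be a nowhere-vanishing function such that the determinant formula of order m holds for every m ≥ 2, every x, all pairwise distinct α₁,…,α_m and pairwise distinct β₁,…,β_m with βᵢ ≠ αⱼ for all i,j. Then for every m ≥ 2, every x, all pairwise distinct α₁,…,α_{m+1} and all pairwise distinct β₁,…,β_{m−1} with βᵢ ≠ αⱼ for all i,j, the addition formula of order m holds at x. (This follows from the Plücker relations for the determinants appearing in the determinant formula.) -/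
/-!
Shift the base point to `y = x + [μ₁] + ⋯ + [μ_m]` for auxiliary parameters `μ` distinct from all
`αᵢ, βⱼ`. The determinant formula of order `m` at `y`, with the `μ` in the role of the `α`, writes
every `ζ(x; γ₁, …, γ_m)` occurring in the addition formula as a constant times
`∏ₐ ∏ₖ (γₐ - μₖ)` times the `m × m` minor, with rows `γ₁, …, γ_m`, of the matrix
`(τ(y + [γ] - [μⱼ]) / ((γ - μⱼ) τ(y)))_{γ, j}`. The products over `a` combine to the same
factor in every term, and what remains is a Plücker relation among these minors.
-/

open scoped BigOperators

noncomputable section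

open Finset Function Matrix

section Pluecker

variable {R : Type*} [CommRing R]

theorem Matrix.sum_neg_one_pow_mul_det_succAbove_smul_eq_zero {n : ℕ}
    (v : Fin (n + 1) → Fin n → R) :
    ∑ i : Fin (n + 1), ((-1) ^ (i : ℕ) * det (of (v ∘ i.succAbove))) • v i = 0 := by
  ext k
  -- expand, along its first column, the determinant of `v` with its `k`-th column prepended
  have h := det_zero_of_column_eq (Fin.succ_ne_zero k).symm
    (M := of fun i => Fin.cons (v i k) (v i)) fun i => rfl
  rw [det_succ_column_zero] at h
  simp only [Finset.sum_apply, Pi.smul_apply, smul_eq_mul, Pi.zero_apply, ← h]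
  refine sum_congr rfl fun i _ => ?_
  have hminor : (of fun i => Fin.cons (v i k) (v i)).submatrix i.succAbove Fin.succ =
      of (v ∘ i.succAbove) := by
    ext; simp
  rw [hminor, of_apply, Fin.cons_zero]
  ring

theorem Matrix.sum_neg_one_pow_mul_det_snoc_mul_det_succAbove_eq_zero {n : ℕ}
    (B : Fin n → Fin (n + 1) → R) (v : Fin (n + 2) → Fin (n + 1) → R) :
    ∑ i : Fin (n + 2),
      (-1) ^ (i : ℕ) * det (of (Fin.snoc B (v i))) * det (of (v ∘ i.succAbove)) = 0 := by
  let L := (detRowAlternating : (Fin (n + 1) → R) [⋀^Fin (n + 1)]→ₗ[R] R).toMultilinearMap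
    |>.toLinearMap (Fin.snoc B 0) (Fin.last n)
  have hL : ∀ u, det (of (Fin.snoc B u)) = L u := fun u => by
    simp only [L, MultilinearMap.toLinearMap_apply, AlternatingMap.coe_multilinearMap,
      Fin.update_snoc_last]
    rfl
  calc _ = L (∑ i : Fin (n + 2), ((-1) ^ (i : ℕ) * det (of (v ∘ i.succAbove))) • v i) := by
        simp only [hL, map_sum, map_smul, smul_eq_mul]
        exact sum_congr rfl fun i _ => by ring
    _ = 0 := by rw [sum_neg_one_pow_mul_det_succAbove_smul_eq_zero, map_zero]

def weightedMinor {n : ℕ} (q : R → R) (row : R → Fin n → R) (L : Fin n → R) : R :=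
  (∏ a, q (L a)) * det (of fun a => row (L a))

theorem sum_neg_one_pow_mul_weightedMinor_snoc_mul_weightedMinor_succAbove {n : ℕ}
    (q : R → R) (row : R → Fin (n + 1) → R) (α : Fin (n + 2) → R) (β : Fin n → R) :
    ∑ i : Fin (n + 2), (-1) ^ (i : ℕ) * weightedMinor q row (Fin.snoc β (α i)) *
      weightedMinor q row (α ∘ i.succAbove) = 0 := by
  have hweight : ∀ i : Fin (n + 2),
      (∏ a, q ((Fin.snoc β (α i) : Fin (n + 1) → R) a)) * ∏ a, q (α (i.succAbove a)) =
        (∏ a, q (β a)) * ∏ a, q (α a) := fun i => by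
    rw [Fin.prod_univ_castSucc, Fin.prod_univ_succAbove (fun a => q (α a)) i]
    simp only [Fin.snoc_castSucc, Fin.snoc_last]
    ring
  have hrows : ∀ i : Fin (n + 2),
      (of fun a => row ((Fin.snoc β (α i) : Fin (n + 1) → R) a)) =
        of (Fin.snoc (row ∘ β) (row (α i))) :=
    fun i => by
      ext a
      induction a using Fin.lastCases <;> simp
  calc _ = (∏ a, q (β a)) * (∏ a, q (α a)) *
        ∑ i : Fin (n + 2), (-1) ^ (i : ℕ) * det (of (Fin.snoc (row ∘ β) ((row ∘ α) i))) *
          det (of ((row ∘ α) ∘ i.succAbove)) := by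
        rw [mul_sum]
        refine sum_congr rfl fun i _ => ?_
        rw [weightedMinor, weightedMinor, hrows, ← hweight i]
        simp only [comp_def]
        ring
    _ = 0 := by rw [sum_neg_one_pow_mul_det_snoc_mul_det_succAbove_eq_zero, mul_zero]

end Pluecker

theorem Vand_eq_neg_one_pow_mul_det_vandermonde {n : ℕ} (γ : Fin n → ℂ) :
    Vand γ = (-1) ^ n.choose 2 * det (vandermonde γ) := by
  have hpairs : ∑ i : Fin n, #(Ioi i) = n.choose 2 := by
    simp only [Fin.card_Ioi]
    rw [Fin.sum_univ_eq_sum_range (fun i => n - 1 - i), sum_range_reflect (fun i => i) n,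
      sum_range_id, Nat.choose_two_right]
  rw [Vand, det_vandermonde, ← hpairs, ← prod_pow_eq_pow_sum, ← prod_mul_distrib]
  refine prod_congr rfl fun i _ => ?_
  rw [← prod_const, ← prod_mul_distrib]
  exact prod_congr rfl fun j _ => by ring

def kpRow (τ : TSeq → ℂ) (y : TSeq) {m : ℕ} (μ : Fin m → ℂ) (b : ℂ) : Fin m → ℂ :=
  fun j => τ (y + ch b - ch (μ j)) / ((b - μ j) * τ y)

theorem zeta_eq_weightedMinor_of_KPDet {τ : TSeq → ℂ} {x : TSeq} {m : ℕ} {μ L : Fin m → ℂ}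
    (hτ : τ (x + ∑ k, ch (μ k)) ≠ 0) (hL : Injective L)
    (hdet : KPDet τ m (x + ∑ k, ch (μ k)) μ L) :
    zeta τ x L = (-1) ^ m.choose 2 * τ (x + ∑ k, ch (μ k)) / Vand μ *
      weightedMinor (fun b => ∏ k, (b - μ k)) (kpRow τ (x + ∑ k, ch (μ k)) μ) L := by
  set y := x + ∑ k, ch (μ k)
  have hshift : y + ∑ a, ch (L a) - ∑ k, ch (μ k) = x + ∑ a, ch (L a) := by
    simp only [y]; abel
  have hV : det (vandermonde L) ≠ 0 := det_vandermonde_ne_zero_iff.2 hL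
  rw [KPDet, hshift, div_eq_iff hτ, ← det_vandermonde] at hdet
  rw [zeta, hdet, Vand_eq_neg_one_pow_mul_det_vandermonde, weightedMinor]
  field_simp
  rfl

/-- Proposition 3: the determinant formulae (of all orders `m ≥ 2`) imply the
addition formulae of all orders `m ≥ 2`. -/
theorem KP_determinantFormula_implies_additionFormulae (τ : TSeq → ℂ) (hτ : ∀ x, τ x ≠ 0)
    (hdet : ∀ (m : ℕ), 2 ≤ m → ∀ (x : TSeq) (α β : Fin m → ℂ),
      Function.Injective α → Function.Injective β →
      (∀ i j, β i ≠ α j) → KPDet τ m x α β) :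
    ∀ (m : ℕ), 2 ≤ m → ∀ (x : TSeq) (α : Fin (m+1) → ℂ) (β : Fin (m-1) → ℂ),
      Function.Injective α → Function.Injective β →
      (∀ i j, β i ≠ α j) → KPAdd τ m x α β := by
  intro m hm x α β hα hβ hβα
  obtain ⟨n, rfl⟩ : ∃ n, m = n + 1 := ⟨m - 1, by omega⟩
  obtain ⟨μ, hμ⟩ := Fin.Embedding.exists_embedding_disjoint_range_of_add_le_ENat_card
    (s := Set.range α ∪ Set.range β) (n := n + 1) (by simp)
  set y := x + ∑ k, ch (μ k)
  set c := (-1) ^ (n + 1).choose 2 * τ y / Vand μ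
  have hzeta : ∀ L : Fin (n + 1) → ℂ, Injective L → (∀ a, L a ∈ Set.range α ∪ Set.range β) →
      zeta τ x L = c * weightedMinor (fun b => ∏ k, (b - μ k)) (kpRow τ y μ) L :=
    fun L hL hLs => zeta_eq_weightedMinor_of_KPDet (hτ y) hL <|
      hdet (n + 1) (by omega) y μ L μ.injective hL fun a k hak =>
        Set.disjoint_left.1 hμ (hLs a) ⟨k, hak.symm⟩
  have hsnoc : ∀ i, Injective (Fin.snoc β (α i) : Fin (n + 1) → ℂ) := fun i =>
    Fin.snoc_injective_of_injective hβ fun ⟨j, hj⟩ => hβα j i hj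
  have hsnoc_mem :
      ∀ i a, (Fin.snoc β (α i) : Fin (n + 1) → ℂ) a ∈ Set.range α ∪ Set.range β := by
    intro i a
    induction a using Fin.lastCases <;> simp
  calc _ = c ^ 2 * ∑ i : Fin (n + 2), (-1) ^ (i : ℕ) *
        weightedMinor (fun b => ∏ k, (b - μ k)) (kpRow τ y μ) (Fin.snoc β (α i)) *
        weightedMinor (fun b => ∏ k, (b - μ k)) (kpRow τ y μ) (α ∘ i.succAbove) := by
        rw [mul_sum]
        refine sum_congr rfl fun i _ => ?_
        rw [hzeta _ (hsnoc i) (hsnoc_mem i),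
          hzeta (fun j => α (i.succAbove j)) (hα.comp Fin.succAbove_right_injective)
            fun a => Or.inl ⟨_, rfl⟩]
        simp only [comp_def]
        ring
    _ = 0 := by
        rw [sum_neg_one_pow_mul_weightedMinor_snoc_mul_weightedMinor_succAbove, mul_zero]

end
end

section
/- (Proposition 6) Let (τ_l)_{l∈ℤ} be a family of nowhere-vanishing functions τ_l : (ℕ≥1 → ℂ) → ℂ such that (a) each τ_l satisfies the KP determinant formula of order m for every m ≥ 2 and all admissible parameters, and (b) the family satisfies the mKP determinant formula of order n for every n ≥ 2 and all admissible parameters. Then the mKP addition formulae with k = 1 hold: for every l ∈ ℤ, every m ≥ 2, every x, all pairwise distinct α₁,…,α_{m+1} ∈ ℂ and all pairwise distinct β₁,…,β_{m−2} ∈ ℂ with βᵢ ≠ αⱼ for all i,j: Σ_{i=1}^{m+1}(−1)^{i−1}·ζ_l(x;β₁,…,β_{m−2},αᵢ)·ζ_{l+1}(x;α₁,…,α̂ᵢ,…,α_{m+1}) = 0. (This follows from the Plücker relations for the determinants in the mKP determinant formula.) -/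
open scoped BigOperators

noncomputable section

/-- `ζ_l(x; γ₁, …, γₙ) = Δ(γ₁, …, γₙ) · τ_l(x + [γ₁] + ⋯ + [γₙ])`. -/
noncomputable def zetal (τ : ℤ → TSeq → ℂ) (l : ℤ) (x : TSeq) {n : ℕ} (γ : Fin n → ℂ) : ℂ :=
  Vand γ * τ l (x + ∑ i, ch (γ i))

/-- The determinant formula of order `n` for the mKP hierarchy. -/
def mKPDet (τ : ℤ → TSeq → ℂ) (l : ℤ) (n : ℕ) (x : TSeq)
    (α : Fin n → ℂ) (β : Fin (n-1) → ℂ) : Prop :=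
  τ (l+1) (x + ∑ i, ch (α i) - ∑ i, ch (β i)) / τ l x =
    (∏ i, ∏ j, (α i - β j)) /
      ((∏ i, ∏ j ∈ Finset.Ioi i, (β i - β j)) * (∏ j, ∏ i ∈ Finset.Ioi j, (α i - α j))) *
    Matrix.det (Matrix.of fun i j : Fin n =>
      if h : (j : ℕ) < n - 1 then
        τ l (x + ch (α i) - ch (β ⟨j, h⟩)) / ((α i - β ⟨j, h⟩) * τ l x)
      else τ (l+1) (x + ch (α i)) / τ l x)

open Finset in
lemma Ioi_castSucc_eq {n : ℕ} (i : Fin n) :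
    Finset.Ioi (i.castSucc) =
      insert (Fin.last n) ((Finset.Ioi i).map ⟨Fin.castSucc, Fin.castSucc_injective n⟩) := by
  ext j
  rcases Fin.eq_castSucc_or_eq_last j with ⟨j', rfl⟩ | rfl
  · simp [Fin.castSucc_lt_castSucc_iff, (Fin.castSucc_lt_last j').ne,
      Fin.castSucc_injective n |>.eq_iff]
  · simp [Fin.castSucc_lt_last]

lemma prod_Ioi_last {n : ℕ} (f : Fin (n+1) → ℂ) : ∏ j ∈ Finset.Ioi (Fin.last n), f j = 1 := by
  apply Finset.prod_eq_one
  intro j hj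
  exact absurd (Finset.mem_Ioi.mp hj) (Fin.not_lt.mpr (Fin.le_last j))

lemma Vand_snoc {n : ℕ} (β : Fin n → ℂ) (z : ℂ) :
    Vand (Fin.snoc β z) = (∏ i, (β i - z)) * Vand β := by
  unfold Vand
  rw [Fin.prod_univ_castSucc]
  rw [prod_Ioi_last, mul_one, ← Finset.prod_mul_distrib]
  apply Finset.prod_congr rfl
  intro i _
  rw [Ioi_castSucc_eq, Finset.prod_insert (by
    simp only [Finset.mem_map, Function.Embedding.coeFn_mk, not_exists]
    exact fun a ⟨_, h⟩ => (Fin.castSucc_lt_last a).ne h)]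
  rw [Finset.prod_map]
  simp [Fin.snoc_castSucc, Fin.snoc_last, mul_comm]

lemma Vand_eq_sign_mul {n : ℕ} (g : Fin n → ℂ) :
    Vand g = (∏ i : Fin n, ∏ _j ∈ Finset.Ioi i, (-1 : ℂ)) *
      ∏ i : Fin n, ∏ j ∈ Finset.Ioi i, (g j - g i) := by
  unfold Vand
  rw [← Finset.prod_mul_distrib]
  refine Finset.prod_congr rfl fun i _ => ?_
  rw [← Finset.prod_mul_distrib]
  exact Finset.prod_congr rfl fun j _ => by ring

lemma Vand_rev_ne_zero {n : ℕ} {g : Fin n → ℂ} (hg : Function.Injective g) :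
    (∏ i : Fin n, ∏ j ∈ Finset.Ioi i, (g j - g i)) ≠ 0 := by
  rw [Finset.prod_ne_zero_iff]
  intro i _
  rw [Finset.prod_ne_zero_iff]
  intro j hj
  exact sub_ne_zero.mpr fun h => (Finset.mem_Ioi.mp hj).ne' (hg h)

lemma Vand_ne_zero {n : ℕ} {g : Fin n → ℂ} (hg : Function.Injective g) :
    Vand g ≠ 0 := by
  unfold Vand
  rw [Finset.prod_ne_zero_iff]
  intro i _
  rw [Finset.prod_ne_zero_iff]
  intro j hj
  exact sub_ne_zero.mpr fun h => (Finset.mem_Ioi.mp hj).ne (hg h)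


/-- Proposition 6: the KP determinant formulae for each `τ_l` together with the
mKP determinant formulae imply the mKP addition formulae with `k = 1`:
`∑_{i=1}^{m+1} (−1)^{i−1} ζ_l(x; β₁,…,β_{m−2},αᵢ) ζ_{l+1}(x; α₁,…,α̂ᵢ,…,α_{m+1}) = 0`. -/
theorem mKP_determinantFormula_implies_additionFormulae_k_one (τ : ℤ → TSeq → ℂ)
    (hτ : ∀ l x, τ l x ≠ 0)
    (hKP : ∀ (l : ℤ) (m : ℕ), 2 ≤ m → ∀ (x : TSeq) (α β : Fin m → ℂ),
      Function.Injective α → Function.Injective β →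
      (∀ i j, β i ≠ α j) → KPDet (τ l) m x α β)
    (hmKP : ∀ (n : ℕ), 2 ≤ n → ∀ (l : ℤ) (x : TSeq) (α : Fin n → ℂ) (β : Fin (n-1) → ℂ),
      Function.Injective α → Function.Injective β →
      (∀ i j, α i ≠ β j) → mKPDet τ l n x α β) :
    ∀ (l : ℤ) (m : ℕ), 2 ≤ m → ∀ (x : TSeq) (α : Fin (m+1) → ℂ) (β : Fin (m-2) → ℂ),
      Function.Injective α → Function.Injective β →
      (∀ i j, β i ≠ α j) →
      ∑ i : Fin (m+1), (-1 : ℂ) ^ (i : ℕ) * zetal τ l x (Fin.snoc β (α i)) *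
        zetal τ (l+1) x (fun j : Fin m => α (i.succAbove j)) = 0 := by
  intro l m hm x α β hα hβ hβα
  obtain ⟨k, rfl⟩ : ∃ k, m = k + 2 := ⟨m - 2, by omega⟩
  show ∑ i : Fin (k+2+1), (-1 : ℂ) ^ (i : ℕ) * zetal τ l x (Fin.snoc (β : Fin k → ℂ) (α i)) *
        zetal τ (l+1) x (fun j : Fin (k+2) => α (i.succAbove j)) = 0
  set βk : Fin k → ℂ := (β : Fin k → ℂ) with hβk
  -- choose an auxiliary parameter γ distinct from all αs and βs
  obtain ⟨γ, hγ⟩ := Infinite.exists_notMem_finset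
    (Finset.image α Finset.univ ∪ Finset.image βk Finset.univ)
  have hγα : ∀ a, α a ≠ γ := fun a h => hγ (Finset.mem_union_left _
    (h ▸ Finset.mem_image_of_mem α (Finset.mem_univ a)))
  have hγβ : ∀ j, βk j ≠ γ := fun j h => hγ (Finset.mem_union_right _
    (h ▸ Finset.mem_image_of_mem βk (Finset.mem_univ j)))
  set β' : Fin (k+1) → ℂ := Fin.snoc βk γ with hβ'
  have hβ'c : ∀ j : Fin k, β' j.castSucc = βk j := fun j => Fin.snoc_castSucc _ _ _
  have hβ'l : β' (Fin.last k) = γ := Fin.snoc_last _ _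
  have hβ'inj : Function.Injective β' := by
    intro a b hab
    rcases Fin.eq_castSucc_or_eq_last a with ⟨a', rfl⟩ | rfl <;>
      rcases Fin.eq_castSucc_or_eq_last b with ⟨b', rfl⟩ | rfl
    · rw [hβ'c, hβ'c] at hab
      exact congrArg Fin.castSucc (hβ (hβk ▸ hab))
    · rw [hβ'c, hβ'l] at hab; exact absurd hab (hγβ a')
    · rw [hβ'c, hβ'l] at hab; exact absurd hab.symm (hγβ b')
    · rfl
  have hαβ' : ∀ a j, α a ≠ β' j := by
    intro a j
    rcases Fin.eq_castSucc_or_eq_last j with ⟨j', rfl⟩ | rfl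
    · rw [hβ'c]; exact fun h => (hβα j' a) (hβk ▸ h.symm)
    · rw [hβ'l]; exact fun h => hγα a h
  set x₀ : TSeq := x + ∑ j : Fin (k+1), ch (β' j) with hx₀
  set V : Matrix (Fin (k+2+1)) (Fin (k+2)) ℂ := Matrix.of fun a c =>
    if h : (c : ℕ) < k + 2 - 1 then
      τ l (x₀ + ch (α a) - ch (β' ⟨(c : ℕ), h⟩)) / ((α a - β' ⟨(c : ℕ), h⟩) * τ l x₀)
    else τ (l+1) (x₀ + ch (α a)) / τ l x₀ with hV
  have hmk : ∀ i : Fin (k+2+1),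
      τ (l+1) (x + ∑ r : Fin (k+2), ch (α (i.succAbove r))) =
      (∏ r : Fin (k+2), ∏ j : Fin (k+1), (α (i.succAbove r) - β' j)) /
        ((∏ j : Fin (k+1), ∏ j' ∈ Finset.Ioi j, (β' j - β' j')) *
          (∏ j : Fin (k+2), ∏ r ∈ Finset.Ioi j, (α (i.succAbove r) - α (i.succAbove j)))) *
      (V.submatrix i.succAbove id).det * τ l x₀ := by
    intro i
    have hinj : Function.Injective (fun r : Fin (k+2) => α (i.succAbove r)) :=
      hα.comp (Fin.succAbove_right_injective)
    have hdist : ∀ (r : Fin (k+2)) (j : Fin (k+1)), α (i.succAbove r) ≠ β' j :=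
      fun r j => hαβ' _ j
    have h := hmKP (k+2) (by omega) l x₀ (fun r => α (i.succAbove r)) β' hinj hβ'inj hdist
    unfold mKPDet at h
    rw [div_eq_iff (hτ l x₀)] at h
    have harg : x₀ + (∑ r : Fin (k+2), ch (α (i.succAbove r))) - (∑ j : Fin (k+1), ch (β' j))
        = x + ∑ r : Fin (k+2), ch (α (i.succAbove r)) := by
      rw [hx₀]; abel
    rw [← harg]
    exact h
  have hk : k < k + 2 := by omega
  set k0 : Fin (k+2) := ⟨k, hk⟩ with hk0
  set W : Matrix (Fin (k+2+1)) (Fin (k+2+1)) ℂ :=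
    Matrix.of fun a c => Fin.cases (V a k0) (fun c' => V a c') c with hWdef
  have hWzero : W.det = 0 := by
    refine Matrix.det_zero_of_column_eq (i := 0) (j := Fin.succ k0)
      (Fin.succ_ne_zero k0).symm fun r => ?_
    simp [hWdef]
  have hWsub : ∀ a : Fin (k+2+1), W.submatrix a.succAbove Fin.succ = V.submatrix a.succAbove id := by
    intro a
    ext r c
    simp [hWdef, Matrix.submatrix]
  have hzero : ∑ a : Fin (k+2+1), (-1:ℂ)^(a:ℕ) * V a k0 * (V.submatrix a.succAbove id).det = 0 := by
    rw [← hWzero, Matrix.det_succ_column_zero]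
    refine Finset.sum_congr rfl fun a _ => ?_
    rw [hWsub a]
    congr 1
  set P : ℂ := ∏ a : Fin (k+2+1), ∏ j : Fin (k+1), (α a - β' j) with hP
  set K : ℂ := (∏ _j : Fin k, (-1:ℂ)) * (∏ r : Fin (k+2), ∏ _s ∈ Finset.Ioi r, (-1:ℂ)) *
    Vand βk * (τ l x₀)^2 * P /
    (∏ j : Fin (k+1), ∏ j' ∈ Finset.Ioi j, (β' j - β' j')) with hK
  have hβ'sum : ∑ j : Fin (k+1), ch (β' j) = (∑ j : Fin k, ch (βk j)) + ch γ := by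
    rw [Fin.sum_univ_castSucc]
    simp [hβ', Fin.snoc_castSucc, Fin.snoc_last]
  have key : ∀ i ∈ (Finset.univ : Finset (Fin (k+2+1))),
      (-1:ℂ)^(i:ℕ) * zetal τ l x (Fin.snoc βk (α i)) *
        zetal τ (l+1) x (fun j : Fin (k+2) => α (i.succAbove j))
      = K * ((-1:ℂ)^(i:ℕ) * V i k0 * (V.submatrix i.succAbove id).det) := by
    intro i _
    have hQ : (∏ j : Fin (k+1), ∏ j' ∈ Finset.Ioi j, (β' j - β' j')) ≠ 0 :=
      Vand_ne_zero hβ'inj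
    have hRA : (∏ j : Fin (k+2), ∏ r ∈ Finset.Ioi j, (α (i.succAbove r) - α (i.succAbove j))) ≠ 0 :=
      Vand_rev_ne_zero (hα.comp (Fin.succAbove_right_injective))
    have ha : (∏ j : Fin k, (α i - βk j)) ≠ 0 := by
      rw [Finset.prod_ne_zero_iff]
      exact fun j _ => sub_ne_zero.mpr fun h => hβα j i h.symm
    have hg : α i - γ ≠ 0 := sub_ne_zero.mpr (hγα i)
    have hτ0 : τ l x₀ ≠ 0 := hτ l x₀
    -- the last-but-one column entry
    have hVk : V i k0 = τ l (x₀ + ch (α i) - ch γ) / ((α i - γ) * τ l x₀) := by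
      have h1 : ((k0 : ℕ)) < k + 2 - 1 := by simp [hk0]
      have h2 : β' ⟨(k0 : ℕ), h1⟩ = γ := hβ'l
      simp only [hV, Matrix.of_apply, dif_pos h1, h2]
    have hVτ : τ l (x₀ + ch (α i) - ch γ) = (α i - γ) * τ l x₀ * V i k0 := by
      rw [hVk]
      field_simp
    -- first zeta factor
    have hsnocsum : ∑ j : Fin (k+1), ch ((Fin.snoc βk (α i) : Fin (k+1) → ℂ) j)
        = (∑ j : Fin k, ch (βk j)) + ch (α i) := by
      rw [Fin.sum_univ_castSucc]
      simp [Fin.snoc_castSucc, Fin.snoc_last]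
    have hargz : x + ∑ j : Fin (k+1), ch ((Fin.snoc βk (α i) : Fin (k+1) → ℂ) j) = x₀ + ch (α i) - ch γ := by
      rw [hsnocsum, hx₀, hβ'sum]
      abel
    have h3 : (∏ j : Fin k, (βk j - α i)) = (∏ _j : Fin k, (-1:ℂ)) * ∏ j : Fin k, (α i - βk j) := by
      rw [← Finset.prod_mul_distrib]
      exact Finset.prod_congr rfl fun j _ => by ring
    have hzl : zetal τ l x (Fin.snoc βk (α i))
        = ((∏ _j : Fin k, (-1:ℂ)) * ∏ j : Fin k, (α i - βk j)) * Vand βk *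
          ((α i - γ) * τ l x₀ * V i k0) := by
      unfold zetal
      rw [Vand_snoc, hargz, hVτ, h3]
    -- second zeta factor
    have hsign : Vand (fun j : Fin (k+2) => α (i.succAbove j))
        = (∏ r : Fin (k+2), ∏ _s ∈ Finset.Ioi r, (-1:ℂ)) *
          ∏ j : Fin (k+2), ∏ r ∈ Finset.Ioi j, (α (i.succAbove r) - α (i.succAbove j)) :=
      Vand_eq_sign_mul _
    have hzl1 : zetal τ (l+1) x (fun j : Fin (k+2) => α (i.succAbove j))
        = ((∏ r : Fin (k+2), ∏ _s ∈ Finset.Ioi r, (-1:ℂ)) *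
            ∏ j : Fin (k+2), ∏ r ∈ Finset.Ioi j, (α (i.succAbove r) - α (i.succAbove j))) *
          ((∏ r : Fin (k+2), ∏ j : Fin (k+1), (α (i.succAbove r) - β' j)) /
            ((∏ j : Fin (k+1), ∏ j' ∈ Finset.Ioi j, (β' j - β' j')) *
              (∏ j : Fin (k+2), ∏ r ∈ Finset.Ioi j, (α (i.succAbove r) - α (i.succAbove j)))) *
            (V.submatrix i.succAbove id).det * τ l x₀) := by
      unfold zetal
      rw [hsign, hmk i]
    -- product splitting
    have hE : (∏ j : Fin (k+1), (α i - β' j)) = (∏ j : Fin k, (α i - βk j)) * (α i - γ) := by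
      rw [Fin.prod_univ_castSucc]
      simp [hβ', Fin.snoc_castSucc, Fin.snoc_last]
    have hEne : (∏ j : Fin (k+1), (α i - β' j)) ≠ 0 := by
      rw [hE]; exact mul_ne_zero ha hg
    have hPA : (∏ r : Fin (k+2), ∏ j : Fin (k+1), (α (i.succAbove r) - β' j))
        = P / ((∏ j : Fin k, (α i - βk j)) * (α i - γ)) := by
      rw [← hE, eq_div_iff hEne, mul_comm]
      exact (Fin.prod_univ_succAbove (fun a => ∏ j : Fin (k+1), (α a - β' j)) i).symm
    rw [hzl, hzl1, hPA, hK]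
    field_simp
  rw [Finset.sum_congr rfl key, ← Finset.mul_sum, hzero, mul_zero]

end
end

section
/- (Lemma 1) Let (τ_l)_{l∈ℤ} be a family of nowhere-vanishing functions τ_l : (ℕ≥1 → ℂ) → ℂ satisfying the mKP three-term equation. Then for every l ∈ ℤ, every integer k ≥ 0, every integer m ≥ 2, every x, all pairwise distinct α₁,…,α_{m+k} ∈ ℂ and all pairwise distinct β₁,…,β_{m−2} ∈ ℂ with βᵢ ≠ αⱼ for all i,j, the mKP addition formula with parameters (l, k, m) holds at x. -/
open scoped BigOperators

noncomputable section

/-- The three-term equation of the mKP hierarchy. -/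
def mKPThreeTerm (τ : ℤ → TSeq → ℂ) : Prop :=
  ∀ (l : ℤ) (x : TSeq) (α₁ α₂ α₃ : ℂ),
    (α₂ - α₃) * τ l (x + ch α₁) * τ (l+1) (x + ch α₂ + ch α₃)
    - (α₁ - α₃) * τ l (x + ch α₂) * τ (l+1) (x + ch α₁ + ch α₃)
    + (α₁ - α₂) * τ l (x + ch α₃) * τ (l+1) (x + ch α₁ + ch α₂) = 0

/-- The tuple `γ₁, …, γ̂ᵢ, …, γₙ` obtained by omitting the `i`-th entry. -/
def omitIdx {n : ℕ} (γ : Fin n → ℂ) (i : Fin n) : Fin (n-1) → ℂ :=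
  fun j =>
    if _ : (j : ℕ) < (i : ℕ) then γ ⟨j, by have := j.isLt; omega⟩
    else γ ⟨(j : ℕ) + 1, by have := j.isLt; omega⟩

/-- The mKP addition formula with parameters `(l, k, m)`:
`∑_{i=1}^{m+k} (−1)^{i−1} ζ_l(x; β₁,…,β_{m−2},αᵢ) ζ_{l+k}(x; α₁,…,α̂ᵢ,…,α_{m+k}) = 0`. -/
def mKPAdd (τ : ℤ → TSeq → ℂ) (l : ℤ) (k m : ℕ) (x : TSeq)
    (α : Fin (m+k) → ℂ) (β : Fin (m-2) → ℂ) : Prop :=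
  ∑ i : Fin (m+k), (-1 : ℂ) ^ (i : ℕ) * zetal τ l x (Fin.snoc β (α i)) *
    zetal τ (l + (k : ℤ)) x (omitIdx α i) = 0

/-! With `M_L(γ) = (γᵢ ^ j · τ_{L+j}(x + [γᵢ]))ᵢⱼ` for points `γ₀, …, γₙ`, the three-term
equation at `α₃ = 0` is the case `n = 1` of the determinant formula
`det M_L(γ) = τ_L(x) ⋯ τ_{L+n-1}(x) · det V(γ) · τ_{L+n}(x + [γ₀] + ⋯ + [γₙ])`,
`V` the Vandermonde matrix. Desnanot–Jacobi condensation of `M_L(γ)` along its first and last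
rows and columns, combined with the same two-point equation, propagates the formula to all `n`;
the induction step divides by the interior minor, so the points are first permuted to move a
possible zero into a corner. Hence `ζ_{L+n}(x; γ)` is `det M_L(γ)` times a constant independent of
`γ`. Expanding `det M_L(β, αᵢ)` along its last row turns the addition formula into a combination
of Laplace expansions of determinants with two equal columns. -/

open Matrix Finset

namespace MKP

section Determinant

variable {R : Type*} [CommRing R]

theorem det_one_updateCol_updateCol {ι : Type*} [Fintype ι] [DecidableEq ι] {i j : ι}
    (hij : i ≠ j) (v w : ι → R) :
    (((1 : Matrix ι ι R).updateCol i v).updateCol j w).det = v i * w j - v j * w i := by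
  -- `B = 1 + U * W` with `W` the rows `eᵢ, eⱼ`, and `det (1 + U * W) = det (1 + W * U)` is `2 × 2`
  let U : Matrix ι (Fin 2) R :=
    of fun a => ![v a - (1 : Matrix ι ι R) a i, w a - (1 : Matrix ι ι R) a j]
  let W : Matrix (Fin 2) ι R := of ![(1 : Matrix ι ι R) i, (1 : Matrix ι ι R) j]
  have hB : ((1 : Matrix ι ι R).updateCol i v).updateCol j w = 1 + U * W := by
    ext a b
    by_cases hbj : b = j
    · subst hbj
      simp [U, W, mul_apply, Fin.sum_univ_two, one_apply, hij]
    by_cases hbi : b = i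
    · subst hbi
      simp [U, W, mul_apply, Fin.sum_univ_two, one_apply, hij, Ne.symm hij]
    · simp [U, W, mul_apply, Fin.sum_univ_two, one_apply, hbj, hbi, Ne.symm hbj, Ne.symm hbi]
  rw [hB, det_one_add_mul_comm, det_fin_two]
  simp [U, W, vecMul, dotProduct, one_apply, hij, Ne.symm hij]
  ring

theorem det_updateCol_single {n : ℕ} (A : Matrix (Fin (n + 1)) (Fin (n + 1)) R)
    (i j : Fin (n + 1)) :
    (A.updateCol j (Pi.single i 1)).det
      = (-1) ^ (i + j : ℕ) * (A.submatrix i.succAbove j.succAbove).det := by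
  rw [det_succ_column _ j, Fintype.sum_eq_single i fun k hk => by simp [hk]]
  simp

theorem det_updateCol_zero_updateCol_last {n : ℕ} (X : Matrix (Fin (n + 2)) (Fin (n + 2)) R) :
    ((X.updateCol 0 (Pi.single 0 1)).updateCol (Fin.last _) (Pi.single (Fin.last _) 1)).det
      = (X.submatrix (Fin.castSucc ∘ Fin.succ) (Fin.castSucc ∘ Fin.succ)).det := by
  have h : (X.updateCol 0 (Pi.single 0 1)).submatrix Fin.castSucc Fin.castSucc
      = (X.submatrix Fin.castSucc Fin.castSucc).updateCol 0 (Pi.single 0 1) := by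
    ext a b
    simp [updateCol_apply, Pi.single_apply]
  rw [det_updateCol_single, Fin.succAbove_last, h, det_updateCol_single]
  simp [← two_mul, pow_mul]

theorem desnanot_jacobi_of_det_ne_zero [IsDomain R] {n : ℕ}
    (X : Matrix (Fin (n + 2)) (Fin (n + 2)) R) (hX : X.det ≠ 0) :
    X.det * (X.submatrix (Fin.castSucc ∘ Fin.succ) (Fin.castSucc ∘ Fin.succ)).det
      = (X.submatrix Fin.succ Fin.succ).det * (X.submatrix Fin.castSucc Fin.castSucc).det
        - (X.submatrix Fin.succ Fin.castSucc).det * (X.submatrix Fin.castSucc Fin.succ).det := by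
  have h0l : (0 : Fin (n + 2)) ≠ Fin.last _ := Fin.last_pos.ne
  set B := ((1 : Matrix (Fin (n + 2)) (Fin (n + 2)) R).updateCol 0
    (X.cramer (Pi.single 0 1))).updateCol (Fin.last _) (X.cramer (Pi.single (Fin.last _) 1))
  have hB : B.det
      = (X.submatrix Fin.succ Fin.succ).det * (X.submatrix Fin.castSucc Fin.castSucc).det
        - (X.submatrix Fin.succ Fin.castSucc).det * (X.submatrix Fin.castSucc Fin.succ).det := by
    rw [det_one_updateCol_updateCol h0l]
    simp only [cramer_apply, det_updateCol_single, Fin.succAbove_zero, Fin.succAbove_last,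
      Fin.val_zero, Fin.val_last]
    ring_nf
    simp only [pow_mul', neg_one_sq, one_pow, mul_one]
  -- by Cramer's rule, `X * B` is `X` with columns `0`, `last` replaced by `det X • e₀`, `det X • eₗ`
  have hXB : (X * B).det = X.det * (X.det
      * (X.submatrix (Fin.castSucc ∘ Fin.succ) (Fin.castSucc ∘ Fin.succ)).det) := by
    rw [mul_updateCol, mul_updateCol, Matrix.mul_one, mulVec_cramer, mulVec_cramer,
      det_updateCol_smul, updateCol_comm _ h0l, det_updateCol_smul, updateCol_comm _ h0l.symm,
      det_updateCol_zero_updateCol_last]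
  rw [← hB]
  exact mul_left_cancel₀ hX (by rw [← hXB, det_mul])

theorem desnanot_jacobi {n : ℕ} (M : Matrix (Fin (n + 2)) (Fin (n + 2)) R) :
    M.det * (M.submatrix (Fin.castSucc ∘ Fin.succ) (Fin.castSucc ∘ Fin.succ)).det
      = (M.submatrix Fin.succ Fin.succ).det * (M.submatrix Fin.castSucc Fin.castSucc).det
        - (M.submatrix Fin.succ Fin.castSucc).det * (M.submatrix Fin.castSucc Fin.succ).det := by
  set f := MvPolynomial.aeval (R := ℤ) fun p : Fin (n + 2) × Fin (n + 2) => M p.1 p.2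
  have hM : f.mapMatrix (mvPolynomialX _ _ ℤ) = M := mvPolynomialX_mapMatrix_aeval ℤ M
  have hsub {p : ℕ} (r c : Fin p → Fin (n + 2)) :
      f.mapMatrix ((mvPolynomialX _ _ ℤ).submatrix r c) = M.submatrix r c := by
    rw [← hM]
    rfl
  have h := congrArg f
    (desnanot_jacobi_of_det_ne_zero _ (det_mvPolynomialX_ne_zero (Fin (n + 2)) ℤ))
  simpa only [map_mul, map_sub, AlgHom.map_det, hsub, hM] using h

theorem det_vandermonde_succ {n : ℕ} (γ : Fin (n + 1) → R) :
    (vandermonde γ).det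
      = (∏ j : Fin n, (γ j.succ - γ 0)) * (vandermonde (γ ∘ Fin.succ)).det := by
  rw [det_vandermonde, det_vandermonde, Fin.prod_univ_succ, Fin.prod_Ioi_zero]
  congr 1
  exact prod_congr rfl fun i _ => Fin.prod_Ioi_succ _ i

theorem det_vandermonde_mul_det_vandermonde_interior {n : ℕ} (γ : Fin (n + 2) → R) :
    (vandermonde γ).det * (vandermonde (γ ∘ Fin.castSucc ∘ Fin.succ)).det
      = (γ (Fin.last _) - γ 0) * (vandermonde (γ ∘ Fin.castSucc)).det
        * (vandermonde (γ ∘ Fin.succ)).det := by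
  rw [det_vandermonde_succ γ, Fin.prod_univ_castSucc, det_vandermonde_succ (γ ∘ Fin.castSucc)]
  simp only [Function.comp_apply, Fin.succ_castSucc, Fin.castSucc_zero, Fin.succ_last,
    Function.comp_assoc]
  ring

theorem det_vandermonde_comp_perm {n : ℕ} (γ : Fin n → R) (σ : Equiv.Perm (Fin n)) :
    (vandermonde (γ ∘ σ)).det = Equiv.Perm.sign σ * (vandermonde γ).det :=
  det_permute σ (vandermonde γ)

theorem sum_neg_one_pow_mul_det_submatrix_succAbove_eq_zero {n : ℕ}
    (A : Matrix (Fin (n + 1)) (Fin n) R) (j : Fin n) :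
    ∑ i : Fin (n + 1), (-1) ^ (i : ℕ) * A i j * (A.submatrix i.succAbove id).det = 0 := by
  have h := det_succ_column_zero (of fun i => Fin.cons (A i j) (A i) : Matrix _ (Fin (n + 1)) R)
  rw [det_zero_of_column_eq (Fin.succ_ne_zero j).symm fun _ => rfl] at h
  exact h.symm

end Determinant

theorem prod_range_add_two_mul_prod_range {M : Type*} [CommMonoid M] (f : ℤ → M) (L : ℤ)
    (k : ℕ) :
    (∏ j ∈ range (k + 2), f (L + j)) * ∏ j ∈ range k, f (L + 1 + j)
      = (∏ j ∈ range (k + 1), f (L + j)) * ∏ j ∈ range (k + 1), f (L + 1 + j) := by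
  rw [prod_range_succ (fun j : ℕ => f (L + j)) (k + 1),
    prod_range_succ (fun j : ℕ => f (L + 1 + j)) k, Nat.cast_succ, ← add_assoc, add_right_comm L]
  ac_rfl

theorem exists_perm_interior_ne_zero {R : Type*} [Zero R] {n : ℕ} {γ : Fin (n + 2) → R}
    (hγ : Function.Injective γ) :
    ∃ σ : Equiv.Perm (Fin (n + 2)), ∀ j, (γ ∘ σ) (Fin.castSucc (Fin.succ j)) ≠ 0 := by
  by_cases h : ∀ j, γ (Fin.castSucc (Fin.succ j)) ≠ 0
  · exact ⟨1, h⟩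
  obtain ⟨j₀, hj₀⟩ := not_forall_not.mp h
  refine ⟨Equiv.swap 0 (Fin.castSucc (Fin.succ j₀)), fun j hj => ?_⟩
  have h0 := hγ (hj.trans hj₀.symm)
  rw [Equiv.swap_apply_eq_iff, Equiv.swap_apply_right] at h0
  simp at h0

theorem Vand_eq_neg_one_pow_mul_det_vandermonde {n : ℕ} (γ : Fin n → ℂ) :
    Vand γ = (-1) ^ (∑ i : Fin n, #(Ioi i)) * (vandermonde γ).det := by
  rw [Vand, det_vandermonde, ← prod_pow_eq_pow_sum, ← prod_mul_distrib]
  refine prod_congr rfl fun i _ => ?_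
  rw [← prod_const, ← prod_mul_distrib]
  exact prod_congr rfl fun j _ => by ring

theorem omitIdx_eq_comp_succAbove {n : ℕ} (γ : Fin (n + 1) → ℂ) (i : Fin (n + 1)) :
    omitIdx γ i = γ ∘ i.succAbove := by
  funext j
  by_cases h : (j : ℕ) < i
  · rw [omitIdx, dif_pos h, Function.comp_apply,
      Fin.succAbove_of_castSucc_lt _ _ (by simpa [Fin.lt_def] using h)]
    rfl
  · rw [omitIdx, dif_neg h, Function.comp_apply,
      Fin.succAbove_of_le_castSucc _ _ (by simpa [Fin.le_def] using h)]
    rfl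

variable {τ : ℤ → TSeq → ℂ}

theorem ch_zero : ch 0 = 0 := by
  funext n
  simp [ch, n.2.ne']

theorem _root_.mKPThreeTerm.two_point (h3 : mKPThreeTerm τ) (l : ℤ) (y : TSeq) (a b : ℂ) :
    a * τ l (y + ch b) * τ (l + 1) (y + ch a) - b * τ l (y + ch a) * τ (l + 1) (y + ch b)
      = (a - b) * τ (l + 1) (y + ch a + ch b) * τ l y := by
  have h := h3 l y a b 0
  simp only [ch_zero, add_zero, sub_zero] at h
  linear_combination -h

-- for `τ ≡ 1` this is `vandermonde γ`
variable (τ) in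
def tauVandermonde (L : ℤ) (x : TSeq) {ι : Type*} (γ : ι → ℂ) (n : ℕ) : Matrix ι (Fin n) ℂ :=
  of fun i j => γ i ^ (j : ℕ) * τ (L + j) (x + ch (γ i))

section tauVandermonde

variable {L : ℤ} {x : TSeq} {ι : Type*} (γ : ι → ℂ) {n : ℕ}

theorem tauVandermonde_submatrix_castSucc {κ : Type*} (f : κ → ι) :
    (tauVandermonde τ L x γ (n + 1)).submatrix f Fin.castSucc = tauVandermonde τ L x (γ ∘ f) n :=
  rfl

theorem tauVandermonde_submatrix_succ {κ : Type*} (f : κ → ι) :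
    (tauVandermonde τ L x γ (n + 1)).submatrix f Fin.succ
      = of fun i j => γ (f i) * tauVandermonde τ (L + 1) x (γ ∘ f) n i j := by
  ext i j
  simp only [tauVandermonde, submatrix_apply, of_apply, Fin.val_succ, Function.comp_apply]
  rw [pow_succ, Nat.cast_succ, ← add_assoc, add_right_comm L]
  ring

theorem det_tauVandermonde_submatrix_succ (f : Fin n → ι) :
    ((tauVandermonde τ L x γ (n + 1)).submatrix f Fin.succ).det
      = (∏ i, γ (f i)) * (tauVandermonde τ (L + 1) x (γ ∘ f) n).det := by
  rw [tauVandermonde_submatrix_succ, det_mul_column]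

theorem det_tauVandermonde_comp_perm (γ : Fin n → ℂ) (σ : Equiv.Perm (Fin n)) :
    (tauVandermonde τ L x (γ ∘ σ) n).det = Equiv.Perm.sign σ * (tauVandermonde τ L x γ n).det :=
  det_permute σ (tauVandermonde τ L x γ n)

end tauVandermonde

variable (τ) in
theorem exists_det_tauVandermonde_snoc_eq_sum (L : ℤ) (x : TSeq) {m : ℕ} (β : Fin m → ℂ) :
    ∃ K : Fin (m + 1) → ℂ, ∀ z, (tauVandermonde τ L x (Fin.snoc β z) (m + 1)).det
      = ∑ j : Fin (m + 1), K j * (z ^ (j : ℕ) * τ (L + j) (x + ch z)) := by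
  refine ⟨fun j => (-1) ^ (m + j : ℕ)
    * ((tauVandermonde τ L x β (m + 1)).submatrix id j.succAbove).det, fun z => ?_⟩
  rw [det_succ_row _ (Fin.last m)]
  refine sum_congr rfl fun j _ => ?_
  have hminor : (tauVandermonde τ L x (Fin.snoc β z) (m + 1)).submatrix Fin.castSucc
      j.succAbove = (tauVandermonde τ L x β (m + 1)).submatrix id j.succAbove := by
    ext
    simp [tauVandermonde]
  rw [Fin.succAbove_last, hminor]
  simp only [tauVandermonde, of_apply, Fin.snoc_last, Fin.val_last]
  ring

variable (τ) in
def TauVandermondeDetFormula (x : TSeq) (n : ℕ) : Prop :=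
  ∀ (L : ℤ) (γ : Fin (n + 1) → ℂ), Function.Injective γ →
    (tauVandermonde τ L x γ (n + 1)).det
      = (∏ j ∈ range n, τ (L + j) x) * (vandermonde γ).det * τ (L + n) (x + ∑ i, ch (γ i))

theorem tauVandermondeDetFormula_zero (x : TSeq) : TauVandermondeDetFormula τ x 0 := by
  intro L γ _
  simp [tauVandermonde, det_unique]

theorem tauVandermondeDetFormula_one (h3 : mKPThreeTerm τ) (x : TSeq) :
    TauVandermondeDetFormula τ x 1 := by
  intro L γ _
  have h := h3.two_point L x (γ 1) (γ 0)
  rw [add_right_comm x] at h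
  rw [det_fin_two, det_fin_two]
  simp [tauVandermonde, Fin.sum_univ_two, ← add_assoc]
  linear_combination h

variable (τ) in
theorem det_tauVandermonde_mul_det_interior (L : ℤ) (x : TSeq) {k : ℕ} (γ : Fin (k + 2 + 1) → ℂ) :
    (tauVandermonde τ L x γ (k + 2 + 1)).det * ((∏ j, γ (Fin.castSucc (Fin.succ j)))
      * (tauVandermonde τ (L + 1) x (γ ∘ Fin.castSucc ∘ Fin.succ) (k + 1)).det)
      = (∏ i, γ (Fin.succ i)) * (tauVandermonde τ (L + 1) x (γ ∘ Fin.succ) (k + 2)).det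
          * (tauVandermonde τ L x (γ ∘ Fin.castSucc) (k + 2)).det
        - (tauVandermonde τ L x (γ ∘ Fin.succ) (k + 2)).det * ((∏ i, γ (Fin.castSucc i))
          * (tauVandermonde τ (L + 1) x (γ ∘ Fin.castSucc) (k + 2)).det) := by
  have h := desnanot_jacobi (tauVandermonde τ L x γ (k + 2 + 1))
  rwa [show (tauVandermonde τ L x γ (k + 2 + 1)).submatrix (Fin.castSucc ∘ Fin.succ)
      (Fin.castSucc ∘ Fin.succ)
      = (tauVandermonde τ L x γ (k + 1 + 1)).submatrix (Fin.castSucc ∘ Fin.succ) Fin.succ from rfl,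
    det_tauVandermonde_submatrix_succ, det_tauVandermonde_submatrix_succ,
    det_tauVandermonde_submatrix_succ, tauVandermonde_submatrix_castSucc,
    tauVandermonde_submatrix_castSucc] at h

theorem tauVandermondeDetFormula_add_two_of_interior_ne_zero (hτ : ∀ l x, τ l x ≠ 0)
    (h3 : mKPThreeTerm τ) {x : TSeq} {k : ℕ} (h0 : TauVandermondeDetFormula τ x k)
    (h1 : TauVandermondeDetFormula τ x (k + 1)) (L : ℤ) (γ : Fin (k + 2 + 1) → ℂ)
    (hγ : Function.Injective γ) (hint : ∀ j, γ (Fin.castSucc (Fin.succ j)) ≠ 0) :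
    (tauVandermonde τ L x γ (k + 2 + 1)).det
      = (∏ j ∈ range (k + 2), τ (L + j) x) * (vandermonde γ).det
        * τ (L + (k + 2 : ℕ)) (x + ∑ i, ch (γ i)) := by
  have hint_inj := hγ.comp ((Fin.castSucc_injective _).comp (Fin.succ_injective _))
  have hdj := det_tauVandermonde_mul_det_interior τ L x γ
  rw [h1 L _ (hγ.comp (Fin.castSucc_injective _)), h1 L _ (hγ.comp (Fin.succ_injective _)),
    h1 (L + 1) _ (hγ.comp (Fin.castSucc_injective _)),
    h1 (L + 1) _ (hγ.comp (Fin.succ_injective _)), h0 (L + 1) _ hint_inj] at hdj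
  simp only [Function.comp_apply] at hdj
  set S := ∑ j, ch (γ (Fin.castSucc (Fin.succ j)))
  have hsum_cs : x + ∑ i : Fin (k + 2), ch (γ (Fin.castSucc i)) = x + S + ch (γ 0) := by
    rw [Fin.sum_univ_succ, add_comm (ch _), ← add_assoc]
    rfl
  have hsum_s : x + ∑ i : Fin (k + 2), ch (γ (Fin.succ i)) = x + S + ch (γ (Fin.last _)) := by
    rw [Fin.sum_univ_castSucc, ← add_assoc]
    simp only [Fin.succ_castSucc, Fin.succ_last, S]
  have hsum : x + ∑ i, ch (γ i) = x + S + ch (γ 0) + ch (γ (Fin.last _)) := by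
    rw [Fin.sum_univ_succ, add_left_comm, hsum_s]
    abel
  have hprod_cs : ∏ i : Fin (k + 2), γ (Fin.castSucc i)
      = γ 0 * ∏ j, γ (Fin.castSucc (Fin.succ j)) :=
    Fin.prod_univ_succ _
  have hprod_s : ∏ i : Fin (k + 2), γ (Fin.succ i)
      = (∏ j, γ (Fin.castSucc (Fin.succ j))) * γ (Fin.last _) := by
    rw [Fin.prod_univ_castSucc]
    simp only [Fin.succ_castSucc, Fin.succ_last]
  rw [hsum_cs, hsum_s, hprod_cs, hprod_s, show L + 1 + (k : ℤ) = L + k + 1 by ring,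
    show L + 1 + ((k + 1 : ℕ) : ℤ) = L + k + 1 + 1 by push_cast; ring,
    show L + ((k + 1 : ℕ) : ℤ) = L + k + 1 by push_cast; ring] at hdj
  rw [hsum, show L + ((k + 2 : ℕ) : ℤ) = L + k + 1 + 1 by push_cast; ring]
  have htwo := h3.two_point (L + k + 1) (x + S) (γ 0) (γ (Fin.last _))
  have hprodτ := prod_range_add_two_mul_prod_range (fun l => τ l x) L k
  have hvand := det_vandermonde_mul_det_vandermonde_interior γ
  set P := ∏ j, γ (Fin.castSucc (Fin.succ j))
  have hE : P * ((∏ j ∈ range k, τ (L + 1 + j) x)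
      * (vandermonde (γ ∘ Fin.castSucc ∘ Fin.succ)).det * τ (L + k + 1) (x + S)) ≠ 0 :=
    mul_ne_zero (prod_ne_zero_iff.mpr fun j _ => hint j) <| mul_ne_zero (mul_ne_zero
      (prod_ne_zero_iff.mpr fun j _ => hτ _ x) (det_vandermonde_ne_zero_iff.mpr hint_inj))
      (hτ _ _)
  refine mul_right_cancel₀ hE ?_
  linear_combination hdj
    - P * (∏ j ∈ range (k + 1), τ (L + j) x) * (∏ j ∈ range (k + 1), τ (L + 1 + j) x)
      * (vandermonde (γ ∘ Fin.succ)).det * (vandermonde (γ ∘ Fin.castSucc)).det * htwo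
    - P * τ (L + k + 1 + 1) (x + S + ch (γ 0) + ch (γ (Fin.last _))) * τ (L + k + 1) (x + S)
      * (vandermonde γ).det * (vandermonde (γ ∘ Fin.castSucc ∘ Fin.succ)).det * hprodτ
    - P * τ (L + k + 1 + 1) (x + S + ch (γ 0) + ch (γ (Fin.last _))) * τ (L + k + 1) (x + S)
      * (∏ j ∈ range (k + 1), τ (L + j) x) * (∏ j ∈ range (k + 1), τ (L + 1 + j) x) * hvand

theorem tauVandermondeDetFormula_add_two (hτ : ∀ l x, τ l x ≠ 0) (h3 : mKPThreeTerm τ)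
    {x : TSeq} {k : ℕ} (h0 : TauVandermondeDetFormula τ x k)
    (h1 : TauVandermondeDetFormula τ x (k + 1)) : TauVandermondeDetFormula τ x (k + 2) := by
  intro L γ hγ
  obtain ⟨σ, hσ⟩ := exists_perm_interior_ne_zero hγ
  have h := tauVandermondeDetFormula_add_two_of_interior_ne_zero hτ h3 h0 h1 L (γ ∘ σ)
    (hγ.comp σ.injective) hσ
  rw [det_tauVandermonde_comp_perm, det_vandermonde_comp_perm] at h
  simp only [Function.comp_apply, Equiv.sum_comp σ fun i => ch (γ i)] at h
  have hσ0 : ((Equiv.Perm.sign σ : ℤ) : ℂ) ≠ 0 := Int.cast_ne_zero.mpr (Units.ne_zero _)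
  exact mul_left_cancel₀ hσ0 (by rw [h]; ring)

theorem tauVandermondeDetFormula_of_mKPThreeTerm (hτ : ∀ l x, τ l x ≠ 0)
    (h3 : mKPThreeTerm τ) (x : TSeq) (n : ℕ) : TauVandermondeDetFormula τ x n :=
  Nat.twoStepInduction (tauVandermondeDetFormula_zero x) (tauVandermondeDetFormula_one h3 x)
    (fun _ h0 h1 => tauVandermondeDetFormula_add_two hτ h3 h0 h1) n

theorem zetal_eq_mul_det_tauVandermonde (hτ : ∀ l x, τ l x ≠ 0) (h3 : mKPThreeTerm τ)
    (x : TSeq) (L : ℤ) {n : ℕ} (γ : Fin (n + 1) → ℂ) (hγ : Function.Injective γ) :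
    zetal τ (L + n) x γ = (-1) ^ (∑ i : Fin (n + 1), #(Ioi i)) / (∏ j ∈ range n, τ (L + j) x)
      * (tauVandermonde τ L x γ (n + 1)).det := by
  have hC : ∏ j ∈ range n, τ (L + j) x ≠ 0 := prod_ne_zero_iff.mpr fun j _ => hτ _ x
  rw [tauVandermondeDetFormula_of_mKPThreeTerm hτ h3 x n L γ hγ, zetal,
    Vand_eq_neg_one_pow_mul_det_vandermonde]
  field_simp

theorem sum_neg_one_pow_mul_zetal_mul_zetal_eq_zero (hτ : ∀ l x, τ l x ≠ 0)
    (h3 : mKPThreeTerm τ) (x : TSeq) (l : ℤ) {m k : ℕ} (α : Fin (m + k + 2) → ℂ)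
    (β : Fin m → ℂ) (hα : Function.Injective α)
    (hβα : ∀ i, Function.Injective (Fin.snoc β (α i) : Fin (m + 1) → ℂ)) :
    ∑ i : Fin (m + k + 2), (-1) ^ (i : ℕ) * zetal τ l x (Fin.snoc β (α i))
      * zetal τ (l + k) x (α ∘ i.succAbove) = 0 := by
  obtain ⟨L, rfl⟩ : ∃ L, l = L + m := ⟨l - m, by ring⟩
  set A := tauVandermonde τ L x α (m + k + 1)
  have hmk : m + 1 ≤ m + k + 1 := by omega
  obtain ⟨K, hK⟩ := exists_det_tauVandermonde_snoc_eq_sum τ L x β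
  have hrow (i) : (tauVandermonde τ L x (Fin.snoc β (α i)) (m + 1)).det
      = ∑ j, K j * A i (Fin.castLE hmk j) :=
    hK (α i)
  obtain ⟨c₁, hζ₁⟩ : ∃ c₁, ∀ i, zetal τ (L + m) x (Fin.snoc β (α i))
      = c₁ * (tauVandermonde τ L x (Fin.snoc β (α i)) (m + 1)).det :=
    ⟨_, fun i => zetal_eq_mul_det_tauVandermonde hτ h3 x L _ (hβα i)⟩
  obtain ⟨c₂, hζ₂⟩ : ∃ c₂, ∀ i : Fin (m + k + 2), zetal τ (L + (m + k : ℕ)) x (α ∘ i.succAbove)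
      = c₂ * (A.submatrix i.succAbove id).det :=
    ⟨_, fun i => zetal_eq_mul_det_tauVandermonde hτ h3 x L _
      (hα.comp Fin.succAbove_right_injective)⟩
  rw [show L + m + k = L + ((m + k : ℕ) : ℤ) by push_cast; ring]
  simp only [hζ₁, hζ₂, hrow, mul_sum, sum_mul]
  rw [sum_comm]
  refine sum_eq_zero fun j _ => ?_
  rw [← mul_zero (c₁ * c₂ * K j), ← sum_neg_one_pow_mul_det_submatrix_succAbove_eq_zero A,
    mul_sum]
  exact sum_congr rfl fun i _ => by ring

end MKP

/-- Lemma 1: the mKP three-term equation implies all the mKP addition formulae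
with parameters `(l, k, m)`, `l ∈ ℤ`, `k ≥ 0`, `m ≥ 2`. -/
theorem mKP_threeTerm_implies_additionFormulae (τ : ℤ → TSeq → ℂ)
    (hτ : ∀ l x, τ l x ≠ 0) (h3 : mKPThreeTerm τ) :
    ∀ (l : ℤ) (k m : ℕ), 2 ≤ m → ∀ (x : TSeq) (α : Fin (m+k) → ℂ) (β : Fin (m-2) → ℂ),
      Function.Injective α → Function.Injective β →
      (∀ i j, β i ≠ α j) → mKPAdd τ l k m x α β := by
  intro l k m hm x α β hα hβ hβα
  obtain ⟨m, rfl⟩ : ∃ m', m = m' + 2 := ⟨m - 2, by omega⟩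
  unfold mKPAdd
  generalize hN : m + 2 + k = N at α
  obtain rfl : N = m + k + 2 := by omega
  simp only [MKP.omitIdx_eq_comp_succAbove]
  exact MKP.sum_neg_one_pow_mul_zetal_mul_zetal_eq_zero hτ h3 x l α β hα fun i =>
    Fin.snoc_injective_of_injective hβ fun ⟨j, hj⟩ => hβα j i hj
end
end

section
/- Let (τ_l)_{l∈ℤ} be a family of nowhere-vanishing functions τ_l : (ℕ≥1 → ℂ) → ℂ. Then the family satisfies the mKP three-term equation (for all l, x, α₁, α₂, α₃) if and only if for every l ∈ ℤ, every k ≥ 0, every m ≥ 2, every x, all pairwise distinct α₁,…,α_{m+k} and all pairwise distinct β₁,…,β_{m−2} with βᵢ ≠ αⱼ, the mKP addition formula with parameters (l, k, m) holds at x. (This is the algebraic content of Theorem 2: the family of mKP addition formulae is equivalent to the mKP hierarchy, so the three-term equation is equivalent to the mKP hierarchy.) -/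
open scoped BigOperators

noncomputable section

namespace MKPAux
open Finset

lemma Ioi_eq_filter {n : ℕ} (i : Fin n) : Finset.Ioi i = Finset.univ.filter (fun j => i < j) := by
  ext j; simp

lemma Vand_eq_full {n : ℕ} (γ : Fin n → ℂ) :
    Vand γ = ∏ i, ∏ j, if i < j then (γ i - γ j) else 1 := by
  unfold Vand
  refine Finset.prod_congr rfl fun i _ => ?_
  rw [Ioi_eq_filter, Finset.prod_filter]

lemma sum_ch_snoc {n : ℕ} (γ : Fin n → ℂ) (a : ℂ) :
    ∑ i, ch ((Fin.snoc γ a : Fin (n+1) → ℂ) i) = (∑ i, ch (γ i)) + ch a := by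
  rw [Fin.sum_univ_castSucc]; simp

lemma Vand_snoc {n : ℕ} (γ : Fin n → ℂ) (a : ℂ) :
    Vand (Fin.snoc γ a : Fin (n+1) → ℂ) = Vand γ * ∏ i, (γ i - a) := by
  rw [Vand_eq_full, Vand_eq_full]
  rw [Fin.prod_univ_castSucc]
  have hlast : (∏ j, if (Fin.last n) < j then ((Fin.snoc γ a : Fin (n+1) → ℂ) (Fin.last n) - (Fin.snoc γ a : Fin (n+1) → ℂ) j) else 1) = 1 := by
    apply Finset.prod_eq_one; intro j _
    rw [if_neg]; exact fun h => absurd h (by simp [Fin.le_last, not_lt, Fin.le_last])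
  rw [hlast, mul_one]
  rw [← Finset.prod_mul_distrib]
  refine Finset.prod_congr rfl fun i _ => ?_
  rw [Fin.prod_univ_castSucc]
  simp only [Fin.snoc_castSucc, Fin.snoc_last, Fin.castSucc_lt_castSucc_iff,
    Fin.castSucc_lt_last, if_pos]

lemma Vand_comp_perm {n : ℕ} (γ : Fin n → ℂ) (σ : Equiv.Perm (Fin n)) :
    Vand (γ ∘ σ) = (Equiv.Perm.sign σ : ℤ) * Vand γ := by
  have key : ∀ δ : Fin n → ℂ, Vand δ = (∏ i : Fin n, ∏ _j ∈ Finset.Ioi i, (-1 : ℂ)) *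
      (Matrix.vandermonde δ).det := by
    intro δ
    rw [Matrix.det_vandermonde, ← Finset.prod_mul_distrib]
    unfold Vand
    refine Finset.prod_congr rfl fun i _ => ?_
    rw [← Finset.prod_mul_distrib]
    refine Finset.prod_congr rfl fun j _ => by ring
  rw [key, key γ]
  have : Matrix.vandermonde (γ ∘ σ) = (Matrix.vandermonde γ).submatrix σ id := by
    ext i j; rfl
  rw [this, Matrix.det_permute]
  push_cast
  ring

lemma Vand_eq_zero {n : ℕ} {γ : Fin n → ℂ} {i j : Fin n} (hij : i ≠ j) (h : γ i = γ j) :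
    Vand γ = 0 := by
  rcases lt_or_gt_of_ne hij with hlt | hlt
  · exact Finset.prod_eq_zero (Finset.mem_univ i)
      (Finset.prod_eq_zero (Finset.mem_Ioi.mpr hlt) (by rw [h, sub_self]))
  · exact Finset.prod_eq_zero (Finset.mem_univ j)
      (Finset.prod_eq_zero (Finset.mem_Ioi.mpr hlt) (by rw [h, sub_self]))

lemma Vand_ne_zero {n : ℕ} {γ : Fin n → ℂ} (h : Function.Injective γ) : Vand γ ≠ 0 := by
  unfold Vand
  apply Finset.prod_ne_zero_iff.mpr
  intro i _
  apply Finset.prod_ne_zero_iff.mpr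
  intro j hj
  exact sub_ne_zero.mpr (fun he => (Finset.mem_Ioi.mp hj).ne' (h he).symm)

lemma Vand_one (γ : Fin 1 → ℂ) : Vand γ = 1 := by
  unfold Vand
  rw [Fin.prod_univ_one]
  apply Finset.prod_eq_one
  intro j hj
  have hv := Finset.mem_Ioi.mp hj
  rw [Fin.lt_def] at hv
  have := j.isLt
  omega

lemma Vand_two (γ : Fin 2 → ℂ) : Vand γ = γ 0 - γ 1 := by
  unfold Vand
  rw [Fin.prod_univ_two]
  have h0 : Finset.Ioi (0 : Fin 2) = {1} := rfl
  have h1 : Finset.Ioi (1 : Fin 2) = ∅ := rfl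
  rw [h0, h1]
  simp

lemma snoc_eq_dite {n : ℕ} (γ : Fin n → ℂ) (a : ℂ) (j : Fin (n+1)) :
    (Fin.snoc γ a : Fin (n+1) → ℂ) j = if h : (j:ℕ) < n then γ ⟨j, h⟩ else a := by
  rcases j with ⟨jv, hjv⟩
  rcases Nat.lt_or_ge jv n with h|h
  · rw [dif_pos h]
    show (Fin.snoc γ a : Fin (n+1) → ℂ) ⟨jv, hjv⟩ = γ ⟨jv, h⟩
    rw [show (⟨jv, hjv⟩ : Fin (n+1)) = Fin.castSucc ⟨jv, h⟩ from rfl, Fin.snoc_castSucc]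
  · rw [dif_neg (by simpa using by omega)]
    rw [show (⟨jv, hjv⟩ : Fin (n+1)) = Fin.last n from by ext; simp only [Fin.val_last]; omega,
      Fin.snoc_last]

lemma snoc_injective {n : ℕ} {g : Fin n → ℂ} {a : ℂ} (hg : Function.Injective g)
    (ha : ∀ i, g i ≠ a) : Function.Injective (Fin.snoc g a : Fin (n+1) → ℂ) := by
  intro b c h
  rw [snoc_eq_dite, snoc_eq_dite] at h
  split_ifs at h with h1 h2 h2
  · have hv := congrArg Fin.val (hg h)
    simp only [Fin.val_mk] at hv
    exact Fin.ext hv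
  · exact absurd h (ha _)
  · exact absurd h.symm (ha _)
  · ext; omega

lemma prod_sub_snoc {n : ℕ} (γ : Fin n → ℂ) (a b : ℂ) :
    ∏ i, ((Fin.snoc γ a : Fin (n+1) → ℂ) i - b) = (∏ i, (γ i - b)) * (a - b) := by
  rw [Fin.prod_univ_castSucc]; simp

lemma zetal_snoc (τ : ℤ → TSeq → ℂ) (l : ℤ) (x : TSeq) {n : ℕ} (γ : Fin n → ℂ) (a : ℂ) :
    zetal τ l x (Fin.snoc γ a : Fin (n+1) → ℂ) =
      Vand γ * (∏ i, (γ i - a)) * τ l ((x + ∑ i, ch (γ i)) + ch a) := by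
  unfold zetal
  rw [Vand_snoc, sum_ch_snoc, add_assoc]

lemma zetal_comp_perm (τ : ℤ → TSeq → ℂ) (l : ℤ) (x : TSeq) {n : ℕ} (γ : Fin n → ℂ)
    (σ : Equiv.Perm (Fin n)) :
    zetal τ l x (γ ∘ σ) = ((Equiv.Perm.sign σ : ℤ) : ℂ) * zetal τ l x γ := by
  unfold zetal
  rw [Vand_comp_perm]
  have hsum : ∑ i, ch ((γ ∘ σ) i) = ∑ i, ch (γ i) :=
    Fintype.sum_equiv σ _ _ (fun i => rfl)
  rw [hsum]
  ring

lemma zetal_cast (τ : ℤ → TSeq → ℂ) (l : ℤ) (x : TSeq) {n n' : ℕ} (h : n' = n)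
    (γ : Fin n → ℂ) : zetal τ l x (γ ∘ Fin.cast h) = zetal τ l x γ := by
  subst h
  congr 1

lemma zetal_one (τ : ℤ → TSeq → ℂ) (l : ℤ) (x : TSeq) (γ : Fin 1 → ℂ) :
    zetal τ l x γ = τ l (x + ch (γ 0)) := by
  unfold zetal
  rw [Vand_one, Fin.sum_univ_one, one_mul]

lemma zetal_two (τ : ℤ → TSeq → ℂ) (l : ℤ) (x : TSeq) (γ : Fin 2 → ℂ) :
    zetal τ l x γ = (γ 0 - γ 1) * τ l (x + ch (γ 0) + ch (γ 1)) := by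
  unfold zetal
  rw [Vand_two, Fin.sum_univ_two, add_assoc]

lemma dagger (τ : ℤ → TSeq → ℂ) (h3 : mKPThreeTerm τ) (l : ℤ) (x : TSeq) {n : ℕ}
    (S : Fin n → ℂ) (p q r : ℂ) :
    zetal τ l x (Fin.snoc S p : Fin (n+1) → ℂ) *
      zetal τ (l+1) x (Fin.snoc (Fin.snoc S q) r : Fin (n+2) → ℂ)
    - zetal τ l x (Fin.snoc S q : Fin (n+1) → ℂ) *
      zetal τ (l+1) x (Fin.snoc (Fin.snoc S p) r : Fin (n+2) → ℂ)
    + zetal τ l x (Fin.snoc S r : Fin (n+1) → ℂ) *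
      zetal τ (l+1) x (Fin.snoc (Fin.snoc S p) q : Fin (n+2) → ℂ) = 0 := by
  simp only [zetal_snoc, Vand_snoc, sum_ch_snoc, prod_sub_snoc, ← add_assoc]
  have h := h3 (l) (x + ∑ i, ch (S i)) p q r
  linear_combination (Vand S * Vand S * (∏ i, (S i - p)) * (∏ i, (S i - q)) *
    (∏ i, (S i - r))) * h

lemma omitIdx_eq_succAbove {n : ℕ} (γ : Fin (n+1) → ℂ) (i : Fin (n+1)) :
    omitIdx γ i = γ ∘ i.succAbove := by
  funext j
  simp only [omitIdx, Function.comp]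
  by_cases h : (j : ℕ) < (i : ℕ)
  · rw [dif_pos h]
    have : i.succAbove j = Fin.castSucc j := by
      rw [Fin.succAbove]
      rw [if_pos]
      rwa [Fin.lt_def, Fin.coe_castSucc]
    rw [this]; rfl
  · rw [dif_neg h]
    have : i.succAbove j = Fin.succ j := by
      rw [Fin.succAbove]
      rw [if_neg]
      rw [Fin.lt_def, Fin.coe_castSucc]; exact h
    rw [this]; rfl

/-- determinant of the matrix whose rows are `ψ 0, …, ψ (n-1)` evaluated at the columns `γ`. -/

lemma omitIdx_snoc_last {n : ℕ} (γ : Fin n → ℂ) (a : ℂ) :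
    omitIdx (Fin.snoc γ a : Fin (n+1) → ℂ) (Fin.last n) = γ := by
  funext j
  rcases j with ⟨jv, hjv⟩
  simp only [omitIdx, snoc_eq_dite, Fin.val_last, Fin.val_mk]
  split_ifs with h1 h2 <;> first | rfl | (exfalso; omega)

lemma omitIdx_snoc_castSucc {n : ℕ} (γ : Fin (n+1) → ℂ) (a : ℂ) (i : Fin (n+1)) :
    omitIdx (Fin.snoc γ a : Fin (n+2) → ℂ) (Fin.castSucc i) =
      Fin.snoc (omitIdx γ i) a := by
  funext j
  rcases j with ⟨jv, hjv⟩
  have hi := i.isLt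
  simp only [omitIdx, snoc_eq_dite, Fin.coe_castSucc, Fin.val_mk]
  split_ifs <;> first | rfl | (exfalso; omega)

lemma omitIdx_cast {N M : ℕ} (h : N = M) (α : Fin N → ℂ) (i : Fin M) (h2 : N - 1 = M - 1) :
    omitIdx α (Fin.cast h.symm i) = omitIdx (α ∘ Fin.cast h.symm) i ∘ Fin.cast h2 := by
  subst h
  rfl

noncomputable def dM (ψ : ℕ → ℂ → ℂ) (n : ℕ) (γ : Fin n → ℂ) : ℂ :=
  Matrix.det (Matrix.of fun i j : Fin n => ψ (i : ℕ) (γ j))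

lemma dM_congr {ψ ψ' : ℕ → ℂ → ℂ} {n : ℕ} (h : ∀ i < n, ψ i = ψ' i) (γ : Fin n → ℂ) :
    dM ψ n γ = dM ψ' n γ := by
  unfold dM; congr 1; funext i j; simp only [Matrix.of_apply]; rw [h i i.isLt]

lemma dM_comp_perm (ψ : ℕ → ℂ → ℂ) {n : ℕ} (γ : Fin n → ℂ) (σ : Equiv.Perm (Fin n)) :
    dM ψ n (γ ∘ σ) = (Equiv.Perm.sign σ : ℤ) * dM ψ n γ := by
  unfold dM
  have : (Matrix.of fun i j : Fin n => ψ (i : ℕ) ((γ ∘ σ) j)) =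
      (Matrix.of fun i j : Fin n => ψ (i : ℕ) (γ j)).submatrix id σ := rfl
  rw [this, Matrix.det_permute']

lemma dM_eq_zero (ψ : ℕ → ℂ → ℂ) {n : ℕ} {γ : Fin n → ℂ} {i j : Fin n} (hij : i ≠ j)
    (h : γ i = γ j) : dM ψ n γ = 0 :=
  Matrix.det_zero_of_column_eq hij (fun k => by simp [h])

lemma dM_one (ψ : ℕ → ℂ → ℂ) (γ : Fin 1 → ℂ) : dM ψ 1 γ = ψ 0 (γ 0) := by
  unfold dM
  rw [Matrix.det_fin_one]
  rfl

lemma rowdup (ψ : ℕ → ℂ → ℂ) {s : ℕ} (t : ℕ) (ht : t < s) (A : Fin (s+1) → ℂ) :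
    ∑ i : Fin (s+1), (-1:ℂ)^(i:ℕ) * ψ t (A i) * dM ψ s (omitIdx A i) = 0 := by
  classical
  set M : Matrix (Fin (s+1)) (Fin (s+1)) ℂ :=
    Matrix.of (fun a b => if (a:ℕ) = 0 then ψ t (A b) else ψ ((a:ℕ) - 1) (A b)) with hM
  have hrow : M 0 = M ⟨t+1, by omega⟩ := by
    funext b; simp [hM]
  have hdet : M.det = 0 :=
    Matrix.det_zero_of_row_eq (by simp [Fin.ext_iff]) hrow
  rw [Matrix.det_succ_row_zero] at hdet
  rw [← hdet]
  refine Finset.sum_congr rfl fun j _ => ?_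
  have h1 : M 0 j = ψ t (A j) := by simp [hM]
  have h2 : M.submatrix Fin.succ j.succAbove =
      Matrix.of fun a b : Fin s => ψ (a : ℕ) ((omitIdx A j) b) := by
    funext a b
    simp only [Matrix.submatrix_apply, hM, Matrix.of_apply, omitIdx_eq_succAbove,
      Function.comp, Fin.val_succ]
    rw [if_neg (by omega)]
    norm_num
  rw [h1, h2]; rfl

lemma detPlucker (ψ : ℕ → ℂ → ℂ) {r s : ℕ} (hrs : r + 1 ≤ s) (B : Fin r → ℂ)
    (A : Fin (s+1) → ℂ) :
    ∑ i : Fin (s+1), (-1:ℂ)^(i:ℕ) * dM ψ (r+1) (Fin.snoc B (A i) : Fin (r+1) → ℂ) *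
      dM ψ s (omitIdx A i) = 0 := by
  have expand : ∀ c : ℂ, dM ψ (r+1) (Fin.snoc B c : Fin (r+1) → ℂ) =
      ∑ t : Fin (r+1), (-1:ℂ)^((t:ℕ)+r) * ψ (t:ℕ) c *
        Matrix.det (Matrix.of fun a b : Fin r => ψ ((t.succAbove a : Fin (r+1)) : ℕ) (B b)) := by
    intro c
    unfold dM
    rw [Matrix.det_succ_column _ (Fin.last r)]
    refine Finset.sum_congr rfl fun t _ => ?_
    simp only [Matrix.of_apply, Fin.snoc_last, Fin.val_last]
    congr 1
    rw [Fin.succAbove_last]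
    congr 1
    funext a b
    simp [Fin.snoc_castSucc]
  simp only [expand, Finset.sum_mul, Finset.mul_sum]
  rw [Finset.sum_comm]
  refine Finset.sum_eq_zero fun t _ => ?_
  have h0 := rowdup ψ (t:ℕ) (by have := t.isLt; omega) A
  calc ∑ i : Fin (s+1), (-1:ℂ)^(i:ℕ) * ((-1:ℂ)^((t:ℕ)+r) * ψ (t:ℕ) (A i) *
        Matrix.det (Matrix.of fun a b : Fin r => ψ ((t.succAbove a : Fin (r+1)) : ℕ) (B b))) *
        dM ψ s (omitIdx A i)
      = ((-1:ℂ)^((t:ℕ)+r) *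
        Matrix.det (Matrix.of fun a b : Fin r => ψ ((t.succAbove a : Fin (r+1)) : ℕ) (B b))) *
        ∑ i : Fin (s+1), (-1:ℂ)^(i:ℕ) * ψ (t:ℕ) (A i) * dM ψ s (omitIdx A i) := by
        rw [Finset.mul_sum]; exact Finset.sum_congr rfl fun i _ => by ring
    _ = 0 := by rw [h0, mul_zero]

lemma dagger_det (ψ : ℕ → ℂ → ℂ) {n : ℕ} (S : Fin n → ℂ) (p q r : ℂ) :
    dM ψ (n+1) (Fin.snoc S p : Fin (n+1) → ℂ) *
      dM ψ (n+2) (Fin.snoc (Fin.snoc S q) r : Fin (n+2) → ℂ)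
    - dM ψ (n+1) (Fin.snoc S q : Fin (n+1) → ℂ) *
      dM ψ (n+2) (Fin.snoc (Fin.snoc S p) r : Fin (n+2) → ℂ)
    + dM ψ (n+1) (Fin.snoc S r : Fin (n+1) → ℂ) *
      dM ψ (n+2) (Fin.snoc (Fin.snoc S p) q : Fin (n+2) → ℂ) = 0 := by
  have h := detPlucker ψ (r := n) (s := n+2) (by omega) S
    (Fin.snoc (Fin.snoc (Fin.snoc S p : Fin (n+1) → ℂ) q : Fin (n+2) → ℂ) r : Fin (n+3) → ℂ)
  rw [Fin.sum_univ_castSucc, Fin.sum_univ_castSucc, Fin.sum_univ_castSucc] at h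
  rw [Finset.sum_eq_zero (fun i₀ _ => ?_)] at h
  · -- remaining three terms
    simp only [Fin.snoc_castSucc, Fin.snoc_last, omitIdx_snoc_last, omitIdx_snoc_castSucc,
      Fin.coe_castSucc, Fin.val_last] at h
    have h1 : (-1:ℂ)^(n+1) = -(-1:ℂ)^n := by rw [pow_succ]; ring
    have h2 : (-1:ℂ)^(n+2) = (-1:ℂ)^n := by rw [pow_add]; norm_num
    rw [h1, h2] at h
    have key : (-1:ℂ)^n * (dM ψ (n+1) (Fin.snoc S p : Fin (n+1) → ℂ) *
      dM ψ (n+2) (Fin.snoc (Fin.snoc S q) r : Fin (n+2) → ℂ)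
    - dM ψ (n+1) (Fin.snoc S q : Fin (n+1) → ℂ) *
      dM ψ (n+2) (Fin.snoc (Fin.snoc S p) r : Fin (n+2) → ℂ)
    + dM ψ (n+1) (Fin.snoc S r : Fin (n+1) → ℂ) *
      dM ψ (n+2) (Fin.snoc (Fin.snoc S p) q : Fin (n+2) → ℂ)) = 0 := by linear_combination h
    exact (mul_eq_zero.mp key).resolve_left (pow_ne_zero n (by norm_num))
  · -- terms with duplicated column
    have hA : (Fin.snoc (Fin.snoc (Fin.snoc S p : Fin (n+1) → ℂ) q : Fin (n+2) → ℂ) r :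
        Fin (n+3) → ℂ) (Fin.castSucc (Fin.castSucc (Fin.castSucc i₀))) = S i₀ := by
      simp [Fin.snoc_castSucc]
    rw [hA]
    have hz : dM ψ (n+1) (Fin.snoc S (S i₀) : Fin (n+1) → ℂ) = 0 := by
      apply dM_eq_zero ψ (i := Fin.castSucc i₀) (j := Fin.last n)
      · exact Fin.ne_of_lt (Fin.castSucc_lt_last i₀)
      · simp [Fin.snoc_castSucc, Fin.snoc_last]
    rw [hz]
    ring

lemma perm_extract {N : ℕ} (γ δ : Fin N → ℂ) (hγ : Function.Injective γ)
    (hrange : ∀ i, ∃ j, δ j = γ i) : ∃ σ : Equiv.Perm (Fin N), γ = δ ∘ σ := by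
  choose f hf using hrange
  have hfinj : Function.Injective f := by
    intro i j hij
    apply hγ
    rw [← hf i, ← hf j, hij]
  have hfbij : Function.Bijective f := Finite.injective_iff_bijective.mp hfinj
  exact ⟨Equiv.ofBijective f hfbij, by funext i; exact (hf i).symm⟩

lemma exchange {u : ℕ} (Ds : (Fin (u+1) → ℂ) → ℂ) (E : (Fin (u+2) → ℂ) → ℂ)
    (hDs : ∀ S, Function.Injective S → Ds S ≠ 0)
    (haltE : ∀ (γ : Fin (u+2) → ℂ) (σ : Equiv.Perm (Fin (u+2))),
      E (γ ∘ σ) = ((Equiv.Perm.sign σ : ℤ) : ℂ) * E γ)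
    (hdag : ∀ (S : Fin u → ℂ) (p₀ q r : ℂ),
      Ds (Fin.snoc S p₀) * E (Fin.snoc (Fin.snoc S q) r)
      - Ds (Fin.snoc S q) * E (Fin.snoc (Fin.snoc S p₀) r)
      + Ds (Fin.snoc S r) * E (Fin.snoc (Fin.snoc S p₀) q) = 0)
    (p : Fin (u+1) → ℂ) (hp : Function.Injective p)
    (hbase : ∀ a, E (Fin.snoc p a) = 0) :
    ∀ γ, E γ = 0 := by
  -- E is killed by precomposition with permutations
  have hEσ : ∀ (γ : Fin (u+2) → ℂ) (σ : Equiv.Perm (Fin (u+2))), E (γ ∘ σ) = 0 → E γ = 0 := by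
    intro γ σ h0
    have hs := haltE γ σ
    rw [h0] at hs
    have hne : ((Equiv.Perm.sign σ : ℤ) : ℂ) ≠ 0 := by
      exact Int.cast_ne_zero.mpr (Units.ne_zero (Equiv.Perm.sign σ))
    exact ((mul_eq_zero.mp hs.symm).resolve_left hne)
  -- E vanishes on non-injective tuples
  have hnoninj : ∀ (γ : Fin (u+2) → ℂ), ¬ Function.Injective γ → E γ = 0 := by
    intro γ hni
    rw [Function.not_injective_iff] at hni
    obtain ⟨i, j, hij, hne⟩ := hni
    have hcomp : γ ∘ (Equiv.swap i j) = γ := by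
      funext k
      rcases eq_or_ne k i with rfl | hki
      · simp [Equiv.swap_apply_left, hij]
      rcases eq_or_ne k j with rfl | hkj
      · simp [Equiv.swap_apply_right, hij]
      · simp [Equiv.swap_apply_of_ne_of_ne hki hkj]
    have hs := haltE γ (Equiv.swap i j)
    rw [hcomp, Equiv.Perm.sign_swap hne] at hs
    have h2 : (2:ℂ) * E γ = 0 := by
      have : ((((-1:ℤˣ) : ℤ)):ℂ) = -1 := by norm_num
      rw [this] at hs
      linear_combination hs
    exact (mul_eq_zero.mp h2).resolve_left (by norm_num)
  -- main induction on the number of entries outside the range of p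
  suffices H : ∀ c (γ : Fin (u+2) → ℂ), Function.Injective γ →
      (Finset.univ.filter fun i => γ i ∉ Set.range p).card = c → E γ = 0 by
    intro γ
    by_cases hinj : Function.Injective γ
    · exact H _ γ hinj rfl
    · exact hnoninj γ hinj
  intro c
  induction c using Nat.strong_induction_on with
  | _ c IH =>
  intro γ hinj hc
  -- at least one entry is outside the range of p
  have hex : ∃ i, γ i ∉ Set.range p := by
    by_contra hall
    push_neg at hall
    choose g hg using hall
    have hginj : Function.Injective g := by
      intro i j hij
      apply hinj
      rw [← hg i, ← hg j, hij]
    have := Fintype.card_le_of_injective g hginj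
    simp at this
  have hc1 : 1 ≤ c := by
    obtain ⟨i, hi⟩ := hex
    rw [← hc]
    exact Finset.card_pos.mpr ⟨i, Finset.mem_filter.mpr ⟨Finset.mem_univ _, hi⟩⟩
  rcases eq_or_lt_of_le hc1 with hc1' | hc2
  · -- c = 1 : γ is a permutation of snoc p a
    obtain ⟨a, ha⟩ := Finset.card_eq_one.mp (by rw [hc]; exact hc1'.symm)
    have haout : γ a ∉ Set.range p := by
      have : a ∈ Finset.univ.filter fun i => γ i ∉ Set.range p :=
        ha ▸ Finset.mem_singleton_self a
      exact (Finset.mem_filter.mp this).2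
    have hrange : ∀ i, ∃ j, (Fin.snoc p (γ a) : Fin (u+2) → ℂ) j = γ i := by
      intro i
      rcases eq_or_ne i a with rfl | hia
      · exact ⟨Fin.last (u+1), by rw [Fin.snoc_last]⟩
      · have hnm : i ∉ Finset.univ.filter fun i => γ i ∉ Set.range p := by
          rw [ha]; simpa using hia
        have hmem : γ i ∈ Set.range p := by
          by_contra hcon
          exact hnm (Finset.mem_filter.mpr ⟨Finset.mem_univ _, hcon⟩)
        obtain ⟨t, ht⟩ := hmem
        exact ⟨Fin.castSucc t, by rw [Fin.snoc_castSucc]; exact ht⟩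
    obtain ⟨σ, hσ⟩ := perm_extract γ _ hinj hrange
    rw [hσ, haltE, hbase, mul_zero]
  · -- c ≥ 2
    obtain ⟨i₁, hi₁m, i₂, hi₂m, h12⟩ := Finset.one_lt_card.mp
      (show 1 < (Finset.univ.filter fun i => γ i ∉ Set.range p).card by rw [hc]; exact hc2)
    have hi₁ : γ i₁ ∉ Set.range p := (Finset.mem_filter.mp hi₁m).2
    have hi₂ : γ i₂ ∉ Set.range p := (Finset.mem_filter.mp hi₂m).2
    have hfresh : ∃ t, p t ∉ Set.range γ := by
      by_contra hall
      push_neg at hall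
      choose g hg using hall
      have hginj : Function.Injective g := fun t₁ t₂ h => hp (by rw [← hg t₁, ← hg t₂, h])
      have hsub : Finset.univ.image g ⊆ (Finset.univ \ {i₁, i₂} : Finset (Fin (u+2))) := by
        intro b hb
        obtain ⟨t, _, rfl⟩ := Finset.mem_image.mp hb
        simp only [Finset.mem_sdiff, Finset.mem_univ, true_and, Finset.mem_insert,
          Finset.mem_singleton]
        push_neg
        constructor
        · rintro rfl; exact hi₁ ⟨t, by rw [hg t]⟩
        · rintro rfl; exact hi₂ ⟨t, by rw [hg t]⟩
      have h1 : (Finset.univ.image g).card = u + 1 := by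
        rw [Finset.card_image_of_injective _ hginj, Finset.card_univ, Fintype.card_fin]
      have h2 : ((Finset.univ \ {i₁, i₂} : Finset (Fin (u+2)))).card = u := by
        rw [Finset.card_sdiff_of_subset (fun z _ => Finset.mem_univ z)]
        rw [Finset.card_univ, Fintype.card_fin,
          Finset.card_insert_of_notMem (by simpa using h12), Finset.card_singleton]
        omega
      have := Finset.card_le_card hsub
      omega
    obtain ⟨t, htfresh⟩ := hfresh
    set e₁ : Fin (u+2) := Fin.castSucc (Fin.last u) with he₁
    set e₂ : Fin (u+2) := Fin.last (u+1) with he₂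
    have he₁val : (e₁ : ℕ) = u := by rw [he₁]; simp
    have he₂val : (e₂ : ℕ) = u + 1 := by rw [he₂]; simp
    have he12 : e₁ ≠ e₂ := by
      intro h
      have := congrArg Fin.val h
      rw [he₁val, he₂val] at this
      omega
    set σ₁ := Equiv.swap e₁ i₁ with hσ₁
    set j₂ := σ₁ i₂ with hj₂
    have hj₂e₁ : j₂ ≠ e₁ := by
      intro h
      have h' := congrArg σ₁ h
      rw [hj₂, Equiv.swap_apply_self, hσ₁, Equiv.swap_apply_left] at h'
      exact h12 h'.symm
    set σ : Equiv.Perm (Fin (u+2)) := (Equiv.swap e₂ j₂).trans σ₁ with hσdef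
    have hσe₁ : σ e₁ = i₁ := by
      rw [hσdef, Equiv.trans_apply, Equiv.swap_apply_of_ne_of_ne he12 (Ne.symm hj₂e₁),
        hσ₁, Equiv.swap_apply_left]
    have hσe₂ : σ e₂ = i₂ := by
      rw [hσdef, Equiv.trans_apply, Equiv.swap_apply_left, hj₂, Equiv.swap_apply_self]
    set δ := γ ∘ σ with hδdef
    have hδinj : Function.Injective δ := hinj.comp σ.injective
    set S : Fin u → ℂ := fun i => δ (Fin.castSucc (Fin.castSucc i)) with hS
    set q := δ e₁ with hqdef
    set r := δ e₂ with hrdef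
    have hq₁ : q = γ i₁ := by
      rw [hqdef, hδdef, Function.comp_apply, hσe₁]
    have hr₂ : r = γ i₂ := by
      rw [hrdef, hδdef, Function.comp_apply, hσe₂]
    have hδsnoc : δ = (Fin.snoc (Fin.snoc S q) r : Fin (u+2) → ℂ) := by
      funext j
      rcases j with ⟨jv, hj⟩
      rw [snoc_eq_dite]
      simp only [Fin.val_mk]
      split_ifs with h1
      · rw [snoc_eq_dite]
        simp only [Fin.val_mk]
        split_ifs with h2
        · rw [hS]
          congr 1
        · have hju : jv = u := by omega
          subst hju
          rw [hqdef]
          congr 1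
      · have hju : jv = u + 1 := by omega
        subst hju
        rw [hrdef]
        congr 1
    have hSinj : Function.Injective S := by
      intro a b h
      have h' : δ (Fin.castSucc (Fin.castSucc a)) = δ (Fin.castSucc (Fin.castSucc b)) := h
      have := hδinj h'
      exact Fin.castSucc_injective _ (Fin.castSucc_injective _ this)
    have hSrange : ∀ i, S i ∈ Set.range γ := fun i => ⟨σ _, rfl⟩
    have hqγ : q ∈ Set.range γ := ⟨i₁, hq₁.symm⟩
    have hrγ : r ∈ Set.range γ := ⟨i₂, hr₂.symm⟩
    have hq_notp : q ∉ Set.range p := by rw [hq₁]; exact hi₁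
    have hr_notp : r ∉ Set.range p := by rw [hr₂]; exact hi₂
    have hpt_ne_S : ∀ i, S i ≠ p t := fun i h => htfresh (h ▸ hSrange i)
    have hq_ne_S : ∀ i, S i ≠ q := by
      intro i h
      have h' : δ (Fin.castSucc (Fin.castSucc i)) = δ e₁ := h
      have hv := congrArg Fin.val (hδinj h')
      rw [he₁val] at hv
      simp only [Fin.coe_castSucc] at hv
      have := i.isLt
      omega
    have hr_ne_S : ∀ i, S i ≠ r := by
      intro i h
      have h' : δ (Fin.castSucc (Fin.castSucc i)) = δ e₂ := h
      have hv := congrArg Fin.val (hδinj h')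
      rw [he₂val] at hv
      simp only [Fin.coe_castSucc] at hv
      have := i.isLt
      omega
    have hpt_ne_q : p t ≠ q := fun h => htfresh (h ▸ hqγ)
    have hpt_ne_r : p t ≠ r := fun h => htfresh (h ▸ hrγ)
    have hinner : Function.Injective (Fin.snoc S (p t) : Fin (u+1) → ℂ) :=
      snoc_injective hSinj hpt_ne_S
    have hδ'inj : Function.Injective (Fin.snoc (Fin.snoc S (p t)) r : Fin (u+2) → ℂ) := by
      apply snoc_injective hinner
      intro j
      rw [snoc_eq_dite]
      split_ifs with h
      · exact hr_ne_S _
      · exact hpt_ne_r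
    have hδ''inj : Function.Injective (Fin.snoc (Fin.snoc S (p t)) q : Fin (u+2) → ℂ) := by
      apply snoc_injective hinner
      intro j
      rw [snoc_eq_dite]
      split_ifs with h
      · exact hq_ne_S _
      · exact hpt_ne_q
    have hcntδ : (Finset.univ.filter fun i => δ i ∉ Set.range p).card = c := by
      rw [← hc]
      apply Finset.card_bij (fun a _ => σ a)
      · intro a ha
        refine Finset.mem_filter.mpr ⟨Finset.mem_univ _, ?_⟩
        exact (Finset.mem_filter.mp ha).2
      · intro a _ b _ h
        exact σ.injective h
      · intro b hb
        refine ⟨σ.symm b, Finset.mem_filter.mpr ⟨Finset.mem_univ _, ?_⟩, by simp⟩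
        have hmem := (Finset.mem_filter.mp hb).2
        show γ (σ (σ.symm b)) ∉ Set.range p
        rwa [Equiv.apply_symm_apply]
    have he₁mem : e₁ ∈ Finset.univ.filter fun i => δ i ∉ Set.range p :=
      Finset.mem_filter.mpr ⟨Finset.mem_univ _, hq_notp⟩
    have happly' : ∀ j : Fin (u+2), j ≠ e₁ →
        (Fin.snoc (Fin.snoc S (p t)) r : Fin (u+2) → ℂ) j = δ j := by
      intro j hne
      rw [hδsnoc]
      rcases j with ⟨jv, hj⟩
      rw [snoc_eq_dite, snoc_eq_dite]
      simp only [Fin.val_mk]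
      split_ifs with h1
      · rw [snoc_eq_dite, snoc_eq_dite]
        simp only [Fin.val_mk]
        split_ifs with h2
        · rfl
        · exfalso
          apply hne
          ext
          rw [he₁val]
          simp only [Fin.val_mk]
          omega
      · rfl
    have hval'e₁ : (Fin.snoc (Fin.snoc S (p t)) r : Fin (u+2) → ℂ) e₁ = p t := by
      rw [he₁, Fin.snoc_castSucc, Fin.snoc_last]
    have happly'' : ∀ j : Fin (u+2), j ≠ e₁ → j ≠ e₂ →
        (Fin.snoc (Fin.snoc S (p t)) q : Fin (u+2) → ℂ) j = δ j := by
      intro j hne hne2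
      rw [hδsnoc]
      rcases j with ⟨jv, hj⟩
      rw [snoc_eq_dite, snoc_eq_dite]
      simp only [Fin.val_mk]
      split_ifs with h1
      · rw [snoc_eq_dite, snoc_eq_dite]
        simp only [Fin.val_mk]
        split_ifs with h2
        · rfl
        · exfalso
          apply hne
          ext
          rw [he₁val]
          simp only [Fin.val_mk]
          omega
      · exfalso
        apply hne2
        ext
        rw [he₂val]
        simp only [Fin.val_mk]
        omega
    have hval''e₁ : (Fin.snoc (Fin.snoc S (p t)) q : Fin (u+2) → ℂ) e₁ = p t := by
      rw [he₁, Fin.snoc_castSucc, Fin.snoc_last]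
    have hval''e₂ : (Fin.snoc (Fin.snoc S (p t)) q : Fin (u+2) → ℂ) e₂ = q := by
      rw [he₂, Fin.snoc_last]
    have hfil' : (Finset.univ.filter fun i =>
        (Fin.snoc (Fin.snoc S (p t)) r : Fin (u+2) → ℂ) i ∉ Set.range p) =
        (Finset.univ.filter fun i => δ i ∉ Set.range p).erase e₁ := by
      ext j
      rcases eq_or_ne j e₁ with rfl | hne
      · simp only [Finset.mem_filter, Finset.mem_univ, true_and, Finset.mem_erase,
          ne_eq, not_true_eq_false, false_and, iff_false, hval'e₁, not_not]
        exact ⟨t, rfl⟩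
      · simp only [Finset.mem_filter, Finset.mem_univ, true_and, Finset.mem_erase, ne_eq, hne,
          not_false_eq_true, happly' j hne]
    have hfil'' : (Finset.univ.filter fun i =>
        (Fin.snoc (Fin.snoc S (p t)) q : Fin (u+2) → ℂ) i ∉ Set.range p) =
        (Finset.univ.filter fun i => δ i ∉ Set.range p).erase e₁ := by
      ext j
      rcases eq_or_ne j e₁ with rfl | hne
      · simp only [Finset.mem_filter, Finset.mem_univ, true_and, Finset.mem_erase,
          ne_eq, not_true_eq_false, false_and, iff_false, hval''e₁, not_not]
        exact ⟨t, rfl⟩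
      rcases eq_or_ne j e₂ with rfl | hne2
      · simp only [Finset.mem_filter, Finset.mem_univ, true_and, Finset.mem_erase, ne_eq, hne,
          not_false_eq_true, hval''e₂, true_and]
        constructor
        · intro _; exact hr_notp
        · intro _; exact hq_notp
      · simp only [Finset.mem_filter, Finset.mem_univ, true_and, Finset.mem_erase, ne_eq, hne,
          not_false_eq_true, happly'' j hne hne2, true_and]
    have hcard' : (Finset.univ.filter fun i =>
        (Fin.snoc (Fin.snoc S (p t)) r : Fin (u+2) → ℂ) i ∉ Set.range p).card = c - 1 := by
      rw [hfil', Finset.card_erase_of_mem he₁mem, hcntδ]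
    have hcard'' : (Finset.univ.filter fun i =>
        (Fin.snoc (Fin.snoc S (p t)) q : Fin (u+2) → ℂ) i ∉ Set.range p).card = c - 1 := by
      rw [hfil'', Finset.card_erase_of_mem he₁mem, hcntδ]
    have hE' : E (Fin.snoc (Fin.snoc S (p t)) r : Fin (u+2) → ℂ) = 0 :=
      IH (c-1) (by omega) _ hδ'inj hcard'
    have hE'' : E (Fin.snoc (Fin.snoc S (p t)) q : Fin (u+2) → ℂ) = 0 :=
      IH (c-1) (by omega) _ hδ''inj hcard''
    have hdag1 := hdag S (p t) q r
    rw [hE', hE''] at hdag1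
    have hEδ : E (Fin.snoc (Fin.snoc S q) r : Fin (u+2) → ℂ) = 0 := by
      have hD : Ds (Fin.snoc S (p t)) ≠ 0 := hDs _ hinner
      have hz : Ds (Fin.snoc S (p t)) * E (Fin.snoc (Fin.snoc S q) r : Fin (u+2) → ℂ) = 0 := by
        linear_combination hdag1
      exact (mul_eq_zero.mp hz).resolve_left hD
    apply hEσ γ σ
    rw [show γ ∘ σ = δ from rfl, hδsnoc]
    exact hEδ

lemma rep_exists (τ : ℤ → TSeq → ℂ) (hτ : ∀ l x, τ l x ≠ 0) (h3 : mKPThreeTerm τ)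
    (lam : ℤ) (x : TSeq) :
    ∀ s : ℕ, ∃ ψ : ℕ → ℂ → ℂ, ∀ n : ℕ, 1 ≤ n → n ≤ s →
      ∀ γ : Fin n → ℂ, zetal τ (lam + (n:ℤ)) x γ = dM ψ n γ := by
  intro s
  induction s with
  | zero => exact ⟨fun _ _ => 0, fun n h1 h2 _ => by omega⟩
  | succ s IH =>
    rcases Nat.eq_zero_or_pos s with rfl | hs
    · -- s + 1 = 1
      refine ⟨fun _ a => τ (lam + 1) (x + ch a), ?_⟩
      intro n h1 h2 γ
      have hn : n = 1 := by omega
      subst hn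
      rw [dM_one]
      unfold zetal
      rw [Vand_one, Fin.sum_univ_one, one_mul]
      norm_num
    · obtain ⟨u, rfl⟩ : ∃ u, s = u + 1 := ⟨s - 1, by omega⟩
      obtain ⟨ψ, hψ⟩ := IH
      -- reference points
      set p : Fin (u+1) → ℂ := fun j => ((j : ℕ) : ℂ) with hpdef
      have hpinj : Function.Injective p := by
        intro a b h
        rw [hpdef] at h
        have : (a : ℕ) = (b : ℕ) := Nat.cast_injective h
        exact Fin.ext this
      have hD : dM ψ (u+1) p ≠ 0 := by
        rw [← hψ (u+1) (by omega) (by omega) p]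
        exact mul_ne_zero (Vand_ne_zero hpinj) (hτ _ _)
      set F : ℂ → ℂ := fun a => zetal τ (lam + ((u+2 : ℕ) : ℤ)) x (Fin.snoc p a : Fin (u+2) → ℂ)
        with hF
      classical
      set ψs : ℂ → ℂ := fun a => if (∃ jj : Fin (u+1), p jj = a) then 0
        else F a / dM ψ (u+1) p with hψs
      set ψ' : ℕ → ℂ → ℂ := fun i => if i = u + 1 then ψs else ψ i with hψ'
      have hagree : ∀ i < u + 2, i ≠ u + 1 → ψ' i = ψ i := by
        intro i _ hne
        rw [hψ']
        simp [hne]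
      have hrep_le : ∀ n : ℕ, 1 ≤ n → n ≤ u + 1 →
          ∀ γ : Fin n → ℂ, zetal τ (lam + (n:ℤ)) x γ = dM ψ' n γ := by
        intro n h1 h2 γ
        rw [← dM_congr (fun i hi => (hagree i (by omega) (by omega)).symm) γ]
        exact hψ n h1 h2 γ
      -- the construction identity
      have hcons : ∀ a : ℂ, dM ψ' (u+2) (Fin.snoc p a : Fin (u+2) → ℂ) = F a := by
        intro a
        unfold dM
        rw [Matrix.det_succ_row _ (Fin.last (u+1))]
        have hterm : ∀ j : Fin (u+2),
            (-1:ℂ)^((Fin.last (u+1) : ℕ) + (j:ℕ)) *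
              (Matrix.of fun i jj : Fin (u+2) => ψ' (i:ℕ) ((Fin.snoc p a : Fin (u+2) → ℂ) jj))
                (Fin.last (u+1)) j *
              Matrix.det (((Matrix.of fun i jj : Fin (u+2) =>
                ψ' (i:ℕ) ((Fin.snoc p a : Fin (u+2) → ℂ) jj))).submatrix
                  (Fin.last (u+1)).succAbove j.succAbove)
            = (-1:ℂ)^((u+1) + (j:ℕ)) * ψs ((Fin.snoc p a : Fin (u+2) → ℂ) j) *
              dM ψ (u+1) (omitIdx (Fin.snoc p a : Fin (u+2) → ℂ) j) := by
          intro j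
          have h1 : (Matrix.of fun i jj : Fin (u+2) =>
              ψ' (i:ℕ) ((Fin.snoc p a : Fin (u+2) → ℂ) jj)) (Fin.last (u+1)) j
              = ψs ((Fin.snoc p a : Fin (u+2) → ℂ) j) := by
            simp [hψ']
          have h2 : Matrix.det (((Matrix.of fun i jj : Fin (u+2) =>
                ψ' (i:ℕ) ((Fin.snoc p a : Fin (u+2) → ℂ) jj))).submatrix
                  (Fin.last (u+1)).succAbove j.succAbove)
              = dM ψ (u+1) (omitIdx (Fin.snoc p a : Fin (u+2) → ℂ) j) := by
            unfold dM
            congr 1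
            funext b c
            simp only [Matrix.submatrix_apply, Matrix.of_apply, Fin.succAbove_last,
              omitIdx_eq_succAbove, Function.comp_apply, Fin.coe_castSucc, hψ']
            rw [if_neg (by have := b.isLt; omega : ¬ (b:ℕ) = u + 1)]
          rw [h1, h2, Fin.val_last]
        rw [Finset.sum_congr rfl (fun j _ => hterm j)]
        by_cases ha : ∃ jj : Fin (u+1), p jj = a
        · -- a is one of the reference points : both sides are 0
          have hzero : ∀ j : Fin (u+2), ψs ((Fin.snoc p a : Fin (u+2) → ℂ) j) = 0 := by
            intro j
            refine Fin.lastCases ?_ (fun j0 => ?_) j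
            · rw [Fin.snoc_last]
              simp only [hψs]
              exact if_pos ha
            · rw [Fin.snoc_castSucc]
              simp only [hψs]
              exact if_pos ⟨j0, rfl⟩
          have hFa : F a = 0 := by
            obtain ⟨jj, hjj⟩ := ha
            show zetal τ (lam + ((u+2 : ℕ) : ℤ)) x (Fin.snoc p a : Fin (u+2) → ℂ) = 0
            unfold zetal
            rw [Vand_eq_zero (i := Fin.castSucc jj) (j := Fin.last (u+1))
              (Fin.ne_of_lt (Fin.castSucc_lt_last jj))
              (by rw [Fin.snoc_castSucc, Fin.snoc_last, hjj]), zero_mul]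
          rw [Finset.sum_eq_zero (fun j _ => by rw [hzero j]; ring), hFa]
        · rw [Fin.sum_univ_castSucc]
          have hfront : ∀ j : Fin (u+1),
              (-1:ℂ)^((u+1) + ((Fin.castSucc j : Fin (u+2)) : ℕ)) *
                ψs ((Fin.snoc p a : Fin (u+2) → ℂ) (Fin.castSucc j)) *
                dM ψ (u+1) (omitIdx (Fin.snoc p a : Fin (u+2) → ℂ) (Fin.castSucc j)) = 0 := by
            intro j
            rw [Fin.snoc_castSucc]
            simp only [hψs]
            rw [if_pos (⟨j, rfl⟩ : ∃ jj : Fin (u+1), p jj = p j)]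
            ring
          rw [Finset.sum_eq_zero (fun j _ => hfront j), zero_add]
          rw [Fin.snoc_last, omitIdx_snoc_last, Fin.val_last]
          simp only [hψs]
          rw [if_neg ha]
          have heven : (-1:ℂ)^((u+1) + (u+1)) = 1 := by
            rw [← two_mul, pow_mul]
            norm_num
          rw [heven, one_mul]
          field_simp
      -- apply the exchange lemma
      set Ds : (Fin (u+1) → ℂ) → ℂ := fun S => zetal τ (lam + ((u+1:ℕ):ℤ)) x S with hDs
      set E : (Fin (u+2) → ℂ) → ℂ :=
        fun γ => zetal τ (lam + ((u+2:ℕ):ℤ)) x γ - dM ψ' (u+2) γ with hE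
      have hEzero : ∀ γ, E γ = 0 := by
        apply exchange Ds E
        · intro S hSinj
          exact mul_ne_zero (Vand_ne_zero hSinj) (hτ _ _)
        · intro γ σ
          simp only [hE]
          rw [zetal_comp_perm, dM_comp_perm]
          ring
        · intro S p₀ q r
          have hzd := dagger τ h3 (lam + ((u+1:ℕ):ℤ)) x S p₀ q r
          have hdd := dagger_det ψ' S p₀ q r
          have hlev : lam + ((u+1:ℕ):ℤ) + 1 = lam + ((u+2:ℕ):ℤ) := by push_cast; ring
          rw [hlev] at hzd
          have hswap : ∀ w : ℂ, dM ψ' (u+1) (Fin.snoc S w : Fin (u+1) → ℂ) =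
              Ds (Fin.snoc S w : Fin (u+1) → ℂ) :=
            fun w => (hrep_le (u+1) (by omega) (le_refl _) _).symm
          rw [hswap p₀, hswap q, hswap r] at hdd
          simp only [hE, hDs]
          simp only [hDs] at hzd hdd
          linear_combination hzd - hdd
        · exact hpinj
        · intro a
          simp only [hE]
          rw [hcons]
          simp only [hF]
          exact sub_self _
      refine ⟨ψ', ?_⟩
      intro n h1 h2 γ
      rcases Nat.lt_or_ge n (u+2) with hlt | hge
      · exact hrep_le n h1 (by omega) γ
      · have hn : n = u + 2 := by omega
        subst hn
        have h0 := hEzero γ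
        simp only [hE] at h0
        exact sub_eq_zero.mp h0

lemma forward (τ : ℤ → TSeq → ℂ) (hτ : ∀ l x, τ l x ≠ 0) (h3 : mKPThreeTerm τ) :
    ∀ (l : ℤ) (k m : ℕ), 2 ≤ m → ∀ (x : TSeq) (α : Fin (m+k) → ℂ) (β : Fin (m-2) → ℂ),
      mKPAdd τ l k m x α β := by
  intro l k m hm x α β
  obtain ⟨r', rfl⟩ : ∃ r', m = r' + 2 := ⟨m - 2, by omega⟩
  unfold mKPAdd
  set s := r' + 1 + k with hsdef
  have hsz : r' + 2 + k = s + 1 := by omega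
  set A : Fin (s+1) → ℂ := α ∘ Fin.cast hsz.symm with hA
  have hsum : ∑ i : Fin (r'+2+k), (-1 : ℂ) ^ (i : ℕ) * zetal τ l x (Fin.snoc β (α i)) *
      zetal τ (l + (k : ℤ)) x (omitIdx α i)
      = ∑ i : Fin (s+1), (-1 : ℂ) ^ (i : ℕ) * zetal τ l x (Fin.snoc β (A i)) *
      zetal τ (l + (k : ℤ)) x (omitIdx A i) := by
    refine (Fintype.sum_bijective (Fin.cast hsz.symm) (finCongr hsz.symm).bijective _ _ ?_).symm
    intro i
    have h2 : r' + 2 + k - 1 = s + 1 - 1 := by omega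
    rw [hA, omitIdx_cast hsz α i h2, zetal_cast]
    rfl
  rw [hsum]
  -- now use the determinant representation
  obtain ⟨ψ, hψ⟩ := rep_exists τ hτ h3 (l - ((r'+1 : ℕ) : ℤ)) x s
  have hl1 : l = l - ((r'+1 : ℕ) : ℤ) + ((r'+1 : ℕ) : ℤ) := by ring
  have hl2 : l + (k : ℤ) = l - ((r'+1 : ℕ) : ℤ) + ((s : ℕ) : ℤ) := by
    rw [hsdef]; push_cast; ring
  have hterm : ∀ i : Fin (s+1),
      (-1 : ℂ) ^ (i : ℕ) * zetal τ l x (Fin.snoc β (A i)) *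
        zetal τ (l + (k : ℤ)) x (omitIdx A i)
      = (-1 : ℂ) ^ (i : ℕ) * dM ψ (r'+1) (Fin.snoc β (A i) : Fin (r'+1) → ℂ) *
        dM ψ s (omitIdx A i) := by
    intro i
    have hz1 : zetal τ l x (Fin.snoc β (A i) : Fin (r'+1) → ℂ) =
        dM ψ (r'+1) (Fin.snoc β (A i) : Fin (r'+1) → ℂ) := by
      rw [hl1]
      exact hψ (r'+1) (by omega) (by omega) _
    have hz2 : zetal τ (l + (k:ℤ)) x (omitIdx A i) = dM ψ s (omitIdx A i) := by
      rw [hl2]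
      exact hψ s (by omega) (le_refl _) _
    rw [hz1, hz2]
  rw [Finset.sum_congr rfl (fun i _ => hterm i)]
  exact detPlucker ψ (by omega) β A

set_option maxHeartbeats 1000000 in
lemma backward (τ : ℤ → TSeq → ℂ)
    (h : ∀ (l : ℤ) (k m : ℕ), 2 ≤ m → ∀ (x : TSeq) (α : Fin (m+k) → ℂ) (β : Fin (m-2) → ℂ),
      Function.Injective α → Function.Injective β →
      (∀ i j, β i ≠ α j) → mKPAdd τ l k m x α β) :
    mKPThreeTerm τ := by
  intro l x a b c
  rcases eq_or_ne a b with rfl | hab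
  · ring
  rcases eq_or_ne a c with rfl | hac
  · rw [show x + ch b + ch a = x + ch a + ch b from by abel]
    ring
  rcases eq_or_ne b c with rfl | hbc
  · ring
  have hadd := h l 1 2 (le_refl 2) x ![a, b, c] ![]
    (by
      intro i j hij
      fin_cases i <;> fin_cases j <;>
        simp only [Matrix.cons_val_zero, Matrix.cons_val_one, Matrix.head_cons,
          Matrix.cons_val_two, Matrix.tail_cons] at hij <;>
        first
          | rfl
          | exact absurd hij hab
          | exact absurd hij hac
          | exact absurd hij hbc
          | exact absurd hij.symm hab
          | exact absurd hij.symm hac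
          | exact absurd hij.symm hbc)
    (fun i => i.elim0)
    (fun i => i.elim0)
  unfold mKPAdd at hadd
  rw [Fin.sum_univ_three] at hadd
  have ho0 : omitIdx ![a, b, c] 0 = ![b, c] := by funext j; fin_cases j <;> rfl
  have ho1 : omitIdx ![a, b, c] 1 = ![a, c] := by funext j; fin_cases j <;> rfl
  have ho2 : omitIdx ![a, b, c] 2 = ![a, b] := by funext j; fin_cases j <;> rfl
  rw [ho0, ho1, ho2, zetal_two, zetal_two, zetal_two, zetal_one, zetal_one, zetal_one] at hadd
  have hsv : ∀ v : ℂ, (Fin.snoc ![] v : Fin 1 → ℂ) 0 = v := by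
    intro v
    rw [show (0 : Fin 1) = Fin.last 0 from rfl, Fin.snoc_last]
  simp only [hsv, Matrix.cons_val_zero, Matrix.cons_val_one, Matrix.head_cons,
    Matrix.cons_val_two, Matrix.tail_cons, Nat.cast_one, Fin.val_zero, Fin.val_one,
    Fin.val_two, pow_zero, pow_one] at hadd
  linear_combination hadd

end MKPAux

/-- Theorem 2 (algebraic form): the mKP three-term equation is equivalent to the
totality of the mKP addition formulae, i.e. to the mKP hierarchy. -/
theorem mKP_threeTerm_iff_additionFormulae (τ : ℤ → TSeq → ℂ)
    (hτ : ∀ l x, τ l x ≠ 0) :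
    mKPThreeTerm τ ↔
      ∀ (l : ℤ) (k m : ℕ), 2 ≤ m → ∀ (x : TSeq) (α : Fin (m+k) → ℂ) (β : Fin (m-2) → ℂ),
        Function.Injective α → Function.Injective β →
        (∀ i j, β i ≠ α j) → mKPAdd τ l k m x α β := by
  constructor
  · intro h3 l k m hm x α β _ _ _
    exact MKPAux.forward τ hτ h3 l k m hm x α β
  · intro h
    exact MKPAux.backward τ h


end
end

section
/- (Proposition 9) Let τ : (ℕ≥1 → ℂ) → ℂ be a nowhere-vanishing function such that the BKP Pfaffian formulae hold for every n (odd n ≥ 3 and even n ≥ 4) and all admissible parameters. Then the BKP addition formulae hold: for every x and all pairwise distinct α₁,…,αₙ ∈ ℂ with αᵢ + αⱼ ≠ 0 for all i < j, (a) if n is odd, Σ_{i=1}^n (−1)^{i−1}·(τ(x+2[αᵢ]_o)/τ(x))·A_{1…î…n}^{−1}·(τ(x+2Σ_{l≠i}[α_l]_o)/τ(x)) − A_{1…n}^{−1}·(τ(x+2Σ_{l=1}^n[α_l]_o)/τ(x)) = 0, and (b) if n is even, Σ_{i=1}^{n−1}(−1)^{i−1}·(α_{in}/α̃_{in})·(τ(x+2[αᵢ]_o+2[αₙ]_o)/τ(x))·A_{1…î…(n−1)}^{−1}·(τ(x+2Σ_{l≤n−1,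 l≠i}[α_l]_o)/τ(x)) − A_{1…n}^{−1}·(τ(x+2Σ_{l=1}^n[α_l]_o)/τ(x)) = 0, where î means the index i is omitted. (This follows from the Plücker relations for Pfaffians.) -/
open scoped BigOperators

noncomputable section

/-- `2[α]ₒ`, the sequence whose `n`-th entry is `2α^{2n−1}/(2n−1)`. -/
noncomputable def chB (α : ℂ) : TSeq :=
  fun n => 2 * α ^ (2 * (n : ℕ) - 1) / ((2 * (n : ℕ) - 1 : ℕ) : ℂ)

/-- The four-term equation of the BKP hierarchy. -/
def FourTerm (τ : TSeq → ℂ) : Prop :=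
  ∀ (x : TSeq) (α₁ α₂ α₃ : ℂ),
    (α₁ + α₂) * (α₁ + α₃) * (α₂ - α₃) * τ (x + chB α₁) * τ (x + chB α₂ + chB α₃)
    - (α₁ + α₂) * (α₂ + α₃) * (α₁ - α₃) * τ (x + chB α₂) * τ (x + chB α₁ + chB α₃)
    + (α₁ + α₃) * (α₂ + α₃) * (α₁ - α₂) * τ (x + chB α₃) * τ (x + chB α₁ + chB α₂)
    - (α₁ - α₂) * (α₁ - α₃) * (α₂ - α₃) * τ x * τ (x + chB α₁ + chB α₂ + chB α₃) = 0

/-- The index `2k` in `Fin (2m)`, for `k : Fin m`. -/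
def fin2 {m : ℕ} (k : Fin m) : Fin (2*m) := ⟨2 * (k : ℕ), by have := k.isLt; omega⟩

/-- The index `2k+1` in `Fin (2m)`, for `k : Fin m`. -/
def fin2' {m : ℕ} (k : Fin m) : Fin (2*m) := ⟨2 * (k : ℕ) + 1, by have := k.isLt; omega⟩

/-- The Pfaffian of a `2m × 2m` (skew-symmetric) matrix:
`Pf a = ∑ sgn(σ) ∏_{k=1}^m a_{σ(2k−1) σ(2k)}`, summed over permutations `σ` with
`σ(1) < σ(3) < ⋯ < σ(2m−1)` and `σ(2k−1) < σ(2k)` for all `k`. -/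
noncomputable def Pf {R : Type*} [CommRing R] (m : ℕ) (a : Fin (2*m) → Fin (2*m) → R) : R :=
  ∑ σ ∈ Finset.univ.filter (fun σ : Equiv.Perm (Fin (2*m)) =>
      (∀ k : Fin m, σ (fin2 k) < σ (fin2' k)) ∧
      ∀ k l : Fin m, k < l → σ (fin2 k) < σ (fin2 l)),
    (Equiv.Perm.sign σ : ℤ) • ∏ k : Fin m, a (σ (fin2 k)) (σ (fin2' k))

/-- The entries of the BKP Pfaffians: `(0,j) = τ(x+2[αⱼ]ₒ)/τ(x)` and
`(i,j) = (αᵢ−αⱼ)/(αᵢ+αⱼ) · τ(x+2[αᵢ]ₒ+2[αⱼ]ₒ)/τ(x)`, extended skew-symmetrically;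
the index `0` is encoded as `none` and the index `i ≥ 1` as `some αᵢ`. -/
noncomputable def pt (τ : TSeq → ℂ) (x : TSeq) : Option ℂ → Option ℂ → ℂ
  | none, none => 0
  | none, some b => τ (x + chB b) / τ x
  | some a, none => -(τ (x + chB a) / τ x)
  | some a, some b => (a - b) / (a + b) * (τ (x + chB a + chB b) / τ x)

/-- `A_{1…n} = ∏_{i<j} (αᵢ+αⱼ)/(αᵢ−αⱼ)`. -/
noncomputable def Afun {n : ℕ} (α : Fin n → ℂ) : ℂ :=
  ∏ i, ∏ j ∈ Finset.Ioi i, (α i + α j) / (α i - α j)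

/-- The BKP Pfaffian formula for odd `n = 2m+1`:
`τ(x + 2Σᵢ[αᵢ]ₒ)/τ(x) = A_{1…n} · Pf((i,j))_{0 ≤ i < j ≤ n}`. -/
def BKPPfOdd (τ : TSeq → ℂ) (x : TSeq) (m : ℕ) (α : Fin (2*m+1) → ℂ) : Prop :=
  τ (x + ∑ i, chB (α i)) / τ x =
    Afun α * Pf (m+1) (fun p q =>
      pt τ x
        (Fin.cases none (fun i => some (α i)) (Fin.cast (by omega : 2*(m+1) = 2*m+1+1) p))
        (Fin.cases none (fun i => some (α i)) (Fin.cast (by omega : 2*(m+1) = 2*m+1+1) q)))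

/-- The BKP Pfaffian formula for even `n = 2m`:
`τ(x + 2Σᵢ[αᵢ]ₒ)/τ(x) = A_{1…n} · Pf((i,j))_{1 ≤ i < j ≤ n}`. -/
def BKPPfEven (τ : TSeq → ℂ) (x : TSeq) (m : ℕ) (α : Fin (2*m) → ℂ) : Prop :=
  τ (x + ∑ i, chB (α i)) / τ x =
    Afun α * Pf m (fun p q => pt τ x (some (α p)) (some (α q)))

/-- The BKP addition formula (53) for odd `n = 2m+1`. -/
def BKPAddOdd (τ : TSeq → ℂ) (x : TSeq) (m : ℕ) (α : Fin (2*m+1) → ℂ) : Prop :=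
  ∑ i : Fin (2*m+1), (-1 : ℂ) ^ (i : ℕ) * (τ (x + chB (α i)) / τ x) *
      (Afun (fun j : Fin (2*m) => α (i.succAbove j)))⁻¹ *
      (τ (x + ∑ j : Fin (2*m), chB (α (i.succAbove j))) / τ x)
    - (Afun α)⁻¹ * (τ (x + ∑ i, chB (α i)) / τ x) = 0

/-- The BKP addition formula (54) for even `n = 2m+2`. -/
def BKPAddEven (τ : TSeq → ℂ) (x : TSeq) (m : ℕ) (α : Fin (2*m+2) → ℂ) : Prop :=
  ∑ i : Fin (2*m+1), (-1 : ℂ) ^ (i : ℕ) *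
      ((α i.castSucc - α (Fin.last (2*m+1))) / (α i.castSucc + α (Fin.last (2*m+1)))) *
      (τ (x + chB (α i.castSucc) + chB (α (Fin.last (2*m+1)))) / τ x) *
      (Afun (fun j : Fin (2*m) => α (Fin.castSucc (i.succAbove j))))⁻¹ *
      (τ (x + ∑ j : Fin (2*m), chB (α (Fin.castSucc (i.succAbove j)))) / τ x)
    - (Afun α)⁻¹ * (τ (x + ∑ i, chB (α i)) / τ x) = 0

/-!
Expanding a Pfaffian along its first row writes it as an alternating sum of the entries of that
row times the complementary Pfaffians. For odd `n` the first row is the `0`-th row of the odd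
Pfaffian formula, and each complementary Pfaffian is the even Pfaffian of the `n - 1` remaining
parameters, which the even formula turns back into a ratio of `τ`'s: this is (53). For even `n`
the same expansion is applied to the even Pfaffian of `αₙ, α₁, …, αₙ₋₁`; moving `αₙ` to the
front multiplies `A` by `(-1)^(n-1) = -1`, which is absorbed by the skew-symmetry of the entries
`(n, i) = -(i, n)`, giving (54). The even formula for `n = 2`, needed for the minors when `n = 3`
or `n = 4`, holds for every `τ`.
-/

open Equiv Finset

section Pfaffian

variable {R : Type*} [CommRing R]

def IsPfPerm (m : ℕ) (σ : Perm (Fin (2*m))) : Prop :=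
  (∀ k : Fin m, σ (fin2 k) < σ (fin2' k)) ∧ ∀ k l : Fin m, k < l → σ (fin2 k) < σ (fin2 l)

lemma fin2_zero (m : ℕ) : (fin2 (0 : Fin (m+1)) : Fin (2*m+1+1)) = 0 := rfl

lemma fin2'_zero (m : ℕ) : (fin2' (0 : Fin (m+1)) : Fin (2*m+1+1)) = 1 := rfl

lemma fin2_succ {m : ℕ} (k : Fin m) : (fin2 k.succ : Fin (2*m+1+1)) = (fin2 k).succ.succ := by
  ext; simp [fin2]; omega

lemma fin2'_succ {m : ℕ} (k : Fin m) : (fin2' k.succ : Fin (2*m+1+1)) = (fin2' k).succ.succ := by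
  ext; simp [fin2']; omega

lemma exists_eq_fin2_or_fin2' {m : ℕ} (y : Fin (2*m)) : (∃ k, y = fin2 k) ∨ ∃ k, y = fin2' k := by
  obtain ⟨c, hc | hc⟩ := Nat.even_or_odd' (y : ℕ)
  · exact Or.inl ⟨⟨c, by omega⟩, Fin.ext hc⟩
  · exact Or.inr ⟨⟨c, by omega⟩, Fin.ext hc⟩

lemma IsPfPerm.apply_zero {m : ℕ} {σ : Perm (Fin (2*m+1+1))} (hσ : IsPfPerm (m+1) σ) :
    σ 0 = 0 := by
  obtain ⟨hpair, hfirst⟩ := hσ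
  have hσ0 : σ (σ.symm 0) = 0 := σ.apply_symm_apply 0
  rcases exists_eq_fin2_or_fin2' (m := m+1) (σ.symm 0) with ⟨k, hk⟩ | ⟨k, hk⟩
  · rcases (Fin.zero_le k).lt_or_eq with hk0 | rfl
    · have := hfirst 0 k hk0
      rw [← hk, hσ0] at this
      exact absurd this (Fin.not_lt_zero _)
    · rw [hk] at hσ0
      exact hσ0
  · have := hpair k
    rw [← hk, hσ0] at this
    exact absurd this (Fin.not_lt_zero _)

/-- The admissible permutation of `Fin (2m+2)` pairing `0` with `j + 1` and ordering the remaining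
indices by `σ`. -/
def pairPerm {m : ℕ} (j : Fin (2*m+1)) (σ : Perm (Fin (2*m))) : Perm (Fin (2*m+1+1)) :=
  Perm.decomposeFin.symm (0, j.cycleRange.symm * Perm.decomposeFin.symm (0, σ))

section pairPerm

variable {m : ℕ} (j : Fin (2*m+1)) (σ : Perm (Fin (2*m)))

@[simp] lemma pairPerm_apply_zero : pairPerm j σ 0 = 0 := by
  simp [pairPerm]

@[simp] lemma pairPerm_apply_one : pairPerm j σ 1 = j.succ := by
  simp [pairPerm, Perm.mul_apply]

@[simp] lemma pairPerm_apply_succ_succ (x : Fin (2*m)) :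
    pairPerm j σ x.succ.succ = (j.succAbove (σ x)).succ := by
  simp [pairPerm, Perm.mul_apply]

lemma sign_pairPerm : Perm.sign (pairPerm j σ) = (-1) ^ (j : ℕ) * Perm.sign σ := by
  simp [pairPerm, Fin.sign_cycleRange]

end pairPerm

lemma pairPerm_injective {m : ℕ} {j j' : Fin (2*m+1)} {σ σ' : Perm (Fin (2*m))}
    (h : pairPerm j σ = pairPerm j' σ') : j = j' ∧ σ = σ' := by
  have hj : j = j' := Fin.succ_injective _ (by simpa using congr($h 1))
  subst hj
  exact ⟨rfl, Equiv.ext fun x => by simpa using congr($h x.succ.succ)⟩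

lemma exists_pairPerm_eq {m : ℕ} {σ : Perm (Fin (2*m+1+1))} (hσ : σ 0 = 0) :
    ∃ j σ', pairPerm j σ' = σ := by
  obtain ⟨⟨p, τ⟩, rfl⟩ := Perm.decomposeFin.symm.surjective σ
  obtain rfl : p = 0 := by simpa using hσ
  obtain ⟨⟨q, σ'⟩, hq⟩ := Perm.decomposeFin.symm.surjective ((τ 0).cycleRange * τ)
  obtain rfl : q = 0 := by simpa [Perm.mul_apply] using congr($hq 0)
  refine ⟨τ 0, σ', ?_⟩
  rw [pairPerm, hq, ← Perm.inv_def, inv_mul_cancel_left]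

lemma isPfPerm_pairPerm_iff {m : ℕ} (j : Fin (2*m+1)) (σ : Perm (Fin (2*m))) :
    IsPfPerm (m+1) (pairPerm j σ) ↔ IsPfPerm m σ := by
  simp [IsPfPerm, Fin.forall_fin_succ, fin2_zero, fin2'_zero, fin2_succ, fin2'_succ]

theorem Pf_succ (m : ℕ) (a : Fin (2*(m+1)) → Fin (2*(m+1)) → R) :
    Pf (m+1) a = ∑ j : Fin (2*m+1), (-1) ^ (j : ℕ) * a 0 j.succ *
      Pf m (fun p q => a (j.succAbove p).succ (j.succAbove q).succ) := by
  simp only [Pf, Finset.mul_sum, ← Finset.sum_product']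
  symm
  refine Finset.sum_bij (fun p _ => pairPerm p.1 p.2) ?_ ?_ ?_ ?_
  · rintro ⟨j, σ⟩ h
    simp only [mem_product, mem_filter, mem_univ, true_and] at h ⊢
    exact (isPfPerm_pairPerm_iff j σ).2 h
  · rintro ⟨j, σ⟩ _ ⟨j', σ'⟩ _ h
    obtain ⟨rfl, rfl⟩ := pairPerm_injective h
    rfl
  · intro σ hσ
    simp only [mem_filter, mem_univ, true_and] at hσ
    obtain ⟨j, σ', rfl⟩ := exists_pairPerm_eq (IsPfPerm.apply_zero hσ)
    refine ⟨(j, σ'), ?_, rfl⟩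
    simp only [mem_product, mem_filter, mem_univ, true_and]
    exact (isPfPerm_pairPerm_iff j σ').1 hσ
  · rintro ⟨j, σ⟩ _
    simp [Fin.prod_univ_succ, sign_pairPerm, fin2_zero, fin2'_zero, fin2_succ, fin2'_succ]
    ring

theorem Pf_zero (a : Fin (2*0) → Fin (2*0) → R) : Pf 0 a = 1 := by
  simp [Pf]

theorem Pf_one (a : Fin (2*1) → Fin (2*1) → R) : Pf 1 a = a 0 1 := by
  simp [Pf_succ, Pf_zero]

end Pfaffian

lemma Fin.prod_Ioi_castSucc {M : Type*} [CommMonoid M] {n : ℕ} (f : Fin (n+1) → M) (i : Fin n) :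
    ∏ j ∈ Ioi i.castSucc, f j = (∏ j ∈ Ioi i, f j.castSucc) * f (Fin.last n) := by
  rw [Ioi_eq_Ioc, Fin.top_eq_last, ← prod_Ioo_mul_eq_prod_Ioc i.castSucc_lt_last,
    ← Fin.map_castSuccEmb_Ioi, prod_map]
  rfl

section Afun

lemma Afun_succ {n : ℕ} (α : Fin (n+1) → ℂ) :
    Afun α = (∏ j : Fin n, (α 0 + α j.succ) / (α 0 - α j.succ)) * Afun (fun j => α j.succ) := by
  simp only [Afun, Fin.prod_univ_succ, Fin.prod_Ioi_zero, Fin.prod_Ioi_succ]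

lemma Afun_castSucc {n : ℕ} (α : Fin (n+1) → ℂ) :
    Afun α = Afun (fun j => α j.castSucc) *
      ∏ j : Fin n, (α j.castSucc + α (Fin.last n)) / (α j.castSucc - α (Fin.last n)) := by
  simp only [Afun, Fin.prod_univ_castSucc, Fin.prod_Ioi_castSucc, ← Fin.top_eq_last, Ioi_top,
    prod_empty, mul_one, prod_mul_distrib]

lemma Afun_comp_cycleRange_last_symm {n : ℕ} (α : Fin (n+1) → ℂ) :
    Afun (fun i => α ((Fin.last n).cycleRange.symm i)) = (-1) ^ n * Afun α := by
  have hflip (a b : ℂ) : (a + b) / (a - b) = -((b + a) / (b - a)) := by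
    rw [← neg_sub, div_neg, add_comm]
  rw [Afun_succ, Afun_castSucc α]
  simp only [Fin.cycleRange_symm_zero, Fin.cycleRange_symm_succ, Fin.succAbove_last,
    hflip (α (Fin.last n)), prod_neg, card_univ, Fintype.card_fin]
  ring

lemma Afun_two (α : Fin 2 → ℂ) : Afun α = (α 0 + α 1) / (α 0 - α 1) := by
  rw [Afun_succ, Afun]
  simp

end Afun

section BKP

def AdmissibleParams {n : ℕ} (α : Fin n → ℂ) : Prop :=
  Function.Injective α ∧ ∀ i j, i < j → α i + α j ≠ 0

lemma AdmissibleParams.comp_injective {k n : ℕ} {α : Fin n → ℂ} (hα : AdmissibleParams α)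
    {f : Fin k → Fin n} (hf : Function.Injective f) : AdmissibleParams (fun i => α (f i)) := by
  refine ⟨hα.1.comp hf, fun i j hij => ?_⟩
  rcases lt_or_gt_of_ne (hf.ne hij.ne) with h | h
  · exact hα.2 _ _ h
  · rw [add_comm]
    exact hα.2 _ _ h

lemma AdmissibleParams.Afun_ne_zero {n : ℕ} {α : Fin n → ℂ} (hα : AdmissibleParams α) :
    Afun α ≠ 0 :=
  prod_ne_zero_iff.2 fun i _ => prod_ne_zero_iff.2 fun j hj =>
    div_ne_zero (hα.2 i j (mem_Ioi.1 hj)) (sub_ne_zero.2 (hα.1.ne (mem_Ioi.1 hj).ne))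

variable {τ : TSeq → ℂ} {x : TSeq}

lemma pt_none_some (b : ℂ) : pt τ x none (some b) = τ (x + chB b) / τ x := rfl

lemma pt_some_some (a b : ℂ) :
    pt τ x (some a) (some b) = (a - b) / (a + b) * (τ (x + chB a + chB b) / τ x) := rfl

lemma bkpPfEven_one {β : Fin (2*1) → ℂ} (hβ : AdmissibleParams β) : BKPPfEven τ x 1 β := by
  have h01 : (0 : Fin 2) < 1 := Fin.zero_lt_one
  have hadd := hβ.2 0 1 h01
  have hsub := sub_ne_zero.2 (hβ.1.ne h01.ne)
  rw [BKPPfEven, Pf_one, Afun_two, pt_some_some, Fin.sum_univ_two, ← add_assoc]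
  field_simp

lemma BKPPfEven.Pf_eq {m : ℕ} {β : Fin (2*m) → ℂ} (h : BKPPfEven τ x m β)
    (hβ : AdmissibleParams β) :
    Pf m (fun p q => pt τ x (some (β p)) (some (β q))) =
      (Afun β)⁻¹ * (τ (x + ∑ i, chB (β i)) / τ x) := by
  rw [h, inv_mul_cancel_left₀ hβ.Afun_ne_zero]

lemma bkpAddOdd_of_bkpPf {m : ℕ} {α : Fin (2*m+1) → ℂ} (hα : AdmissibleParams α)
    (hPf : BKPPfOdd τ x m α)
    (hPfEven : ∀ β : Fin (2*m) → ℂ, AdmissibleParams β → BKPPfEven τ x m β) :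
    BKPAddOdd τ x m α := by
  rw [BKPPfOdd, Pf_succ] at hPf
  simp only [Fin.cast_eq_self, Fin.cases_zero, Fin.cases_succ, pt_none_some] at hPf
  rw [BKPAddOdd, sub_eq_zero, hPf, inv_mul_cancel_left₀ hα.Afun_ne_zero]
  refine sum_congr rfl fun i _ => ?_
  have hminor := hα.comp_injective i.succAbove_right_injective
  rw [(hPfEven _ hminor).Pf_eq hminor]
  ring

lemma bkpAddEven_of_bkpPf {m : ℕ} {α : Fin (2*m+2) → ℂ} (hα : AdmissibleParams α)
    (hPf : BKPPfEven τ x (m+1) (fun i => α ((Fin.last (2*m+1)).cycleRange.symm i)))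
    (hPfEven : ∀ β : Fin (2*m) → ℂ, AdmissibleParams β → BKPPfEven τ x m β) :
    BKPAddEven τ x m α := by
  have hrot : Afun (fun i : Fin (2*(m+1)) => α ((Fin.last (2*m+1)).cycleRange.symm i)) =
      -Afun α :=
    (Afun_comp_cycleRange_last_symm (n := 2*m+1) α).trans
      (by rw [Odd.neg_one_pow ⟨m, rfl⟩, neg_one_mul])
  rw [BKPPfEven, Pf_succ, Equiv.sum_comp _ (fun i => chB (α i)), hrot] at hPf
  simp only [Fin.cycleRange_symm_zero, Fin.cycleRange_symm_succ, Fin.succAbove_last] at hPf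
  rw [BKPAddEven, sub_eq_zero, hPf, neg_mul, mul_neg, inv_mul_cancel_left₀ hα.Afun_ne_zero,
    ← sum_neg_distrib]
  refine sum_congr rfl fun i _ => ?_
  have hminor : AdmissibleParams (fun j => α (i.succAbove j).castSucc) :=
    hα.comp_injective ((Fin.castSucc_injective _).comp i.succAbove_right_injective)
  rw [(hPfEven _ hminor).Pf_eq hminor, pt_some_some, add_right_comm x]
  have hflip (a b : ℂ) : (a - b) / (a + b) = -((b - a) / (b + a)) := by
    rw [← neg_sub, neg_div, add_comm]
  rw [hflip (α (Fin.last _))]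
  ring

end BKP

theorem BKP_pfaffianFormulae_imply_additionFormulae_general (τ : TSeq → ℂ)
    (hOdd : ∀ (m : ℕ), 1 ≤ m → ∀ (x : TSeq) (α : Fin (2*m+1) → ℂ),
      Function.Injective α → (∀ i j, i < j → α i + α j ≠ 0) → BKPPfOdd τ x m α)
    (hEven : ∀ (m : ℕ), 2 ≤ m → ∀ (x : TSeq) (α : Fin (2*m) → ℂ),
      Function.Injective α → (∀ i j, i < j → α i + α j ≠ 0) → BKPPfEven τ x m α) :
    (∀ (m : ℕ), 1 ≤ m → ∀ (x : TSeq) (α : Fin (2*m+1) → ℂ),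
      Function.Injective α → (∀ i j, i < j → α i + α j ≠ 0) → BKPAddOdd τ x m α) ∧
    (∀ (m : ℕ), 1 ≤ m → ∀ (x : TSeq) (α : Fin (2*m+2) → ℂ),
      Function.Injective α → (∀ i j, i < j → α i + α j ≠ 0) → BKPAddEven τ x m α) := by
  have hEvenPos (m : ℕ) (hm : 1 ≤ m) (x : TSeq) (β : Fin (2*m) → ℂ) (hβ : AdmissibleParams β) :
      BKPPfEven τ x m β := by
    obtain rfl | hm2 := hm.eq_or_lt
    · exact bkpPfEven_one hβ
    · exact hEven m hm2 x β hβ.1 hβ.2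
  refine ⟨fun m hm x α hinj hsum => ?_, fun m hm x α hinj hsum => ?_⟩
  · exact bkpAddOdd_of_bkpPf ⟨hinj, hsum⟩ (hOdd m hm x α hinj hsum) (hEvenPos m hm x)
  · obtain ⟨hrotInj, hrotSum⟩ := AdmissibleParams.comp_injective (α := α) ⟨hinj, hsum⟩
      (Fin.last (2*m+1)).cycleRange.symm.injective
    exact bkpAddEven_of_bkpPf ⟨hinj, hsum⟩ (hEven (m+1) (by omega) x _ hrotInj hrotSum)
      (hEvenPos m hm x)

/-- Proposition 9: the BKP Pfaffian formulae imply the BKP addition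
formulae (53) (odd `n`) and (54) (even `n`). -/
theorem BKP_pfaffianFormulae_imply_additionFormulae (τ : TSeq → ℂ) (hτ : ∀ x, τ x ≠ 0)
    (hOdd : ∀ (m : ℕ), 1 ≤ m → ∀ (x : TSeq) (α : Fin (2*m+1) → ℂ),
      Function.Injective α → (∀ i j, i < j → α i + α j ≠ 0) → BKPPfOdd τ x m α)
    (hEven : ∀ (m : ℕ), 2 ≤ m → ∀ (x : TSeq) (α : Fin (2*m) → ℂ),
      Function.Injective α → (∀ i j, i < j → α i + α j ≠ 0) → BKPPfEven τ x m α) :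
    (∀ (m : ℕ), 1 ≤ m → ∀ (x : TSeq) (α : Fin (2*m+1) → ℂ),
      Function.Injective α → (∀ i j, i < j → α i + α j ≠ 0) → BKPAddOdd τ x m α) ∧
    (∀ (m : ℕ), 1 ≤ m → ∀ (x : TSeq) (α : Fin (2*m+2) → ℂ),
      Function.Injective α → (∀ i j, i < j → α i + α j ≠ 0) → BKPAddEven τ x m α) :=
  BKP_pfaffianFormulae_imply_additionFormulae_general τ hOdd hEven

end
end
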